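/- arXiv:1103.1858 — 12 statements merged into one kernel-verified Lean document; each statement's English description precedes it below -/
import Mathlib

section
/- Let g ≥ 1 and let τ be a symmetric g×g complex matrix whose imaginary part Im τ is positive definite. Then for every z ∈ ℂ^g the family (n ↦ exp(πi·nᵀτn + 2πi·nᵀz)), indexed by n ∈ ℤ^g, is (absolutely) summable; in particular the series defining the Riemann theta function θ(τ,z) converges. -/
open Complex Matrix Finset Filter

/-- The Riemann theta function `θ(τ,z) = Σ_{n ∈ ℤ^g} exp(πi nᵀτn + 2πi nᵀz)`. -/
noncomputable def riemannTheta {g : ℕ} (τ : Matrix (Fin g) (Fin g) ℂ) (z : Fin g → ℂ) : ℂ :=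
  ∑' n : Fin g → ℤ,
    Complex.exp ((Real.pi : ℂ) * Complex.I * (∑ i, ∑ j, (n i : ℂ) * τ i j * (n j : ℂ)) +
      2 * (Real.pi : ℂ) * Complex.I * (∑ i, (n i : ℂ) * z i))

lemma lemA {a : ℝ} (ha : 0 < a) (b : ℝ) :
    Summable fun n : ℤ => Real.exp (-a * (n : ℝ) ^ 2 + b * |(n : ℝ)|) := by
  have h := summable_pow_mul_jacobiTheta₂_term_bound (b / (2 * Real.pi))
    (T := a / Real.pi) (by positivity) 0
  refine h.congr fun n => ?_
  rw [pow_zero, one_mul]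
  congr 1
  have hπ := Real.pi_ne_zero
  field_simp
  push_cast
  ring

lemma lemB {a : ℝ} (ha : 0 < a) (b : ℝ) : ∀ g : ℕ,
    Summable fun n : Fin g → ℤ =>
      Real.exp (∑ i, (-a * (n i : ℝ) ^ 2 + b * |(n i : ℝ)|)) := by
  intro g
  induction g with
  | zero => exact .of_finite
  | succ g ih =>
    rw [← (Fin.consEquiv fun _ : Fin (g+1) => ℤ).summable_iff]
    have h := (lemA ha b).mul_of_nonneg ih (fun _ => (Real.exp_pos _).le)
      (fun _ => (Real.exp_pos _).le)
    refine h.congr fun p => ?_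
    simp only [Fin.consEquiv_apply, Function.comp_apply, Fin.sum_univ_succ,
      Fin.cons_zero, Fin.cons_succ, Real.exp_add]

lemma lemC {g : ℕ} (hg : 1 ≤ g) {M : Matrix (Fin g) (Fin g) ℝ} (hM : M.PosDef) :
    ∃ c > 0, ∀ x : Fin g → ℝ, c * ∑ i, (x i) ^ 2 ≤ ∑ i, ∑ j, x i * M i j * x j := by
  set E := EuclideanSpace ℝ (Fin g)
  set f : E → ℝ := fun x => ∑ i, ∑ j, x i * M i j * x j with hf
  have hcont : Continuous f := by
    refine continuous_finset_sum _ fun i _ => continuous_finset_sum _ fun j _ => ?_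
    exact (((continuous_apply i).comp (PiLp.continuous_ofLp 2 _)).mul continuous_const).mul
      ((continuous_apply j).comp (PiLp.continuous_ofLp 2 _))
  have hfx : ∀ (x : Fin g → ℝ), f (WithLp.toLp 2 x) = x ⬝ᵥ M *ᵥ x := by
    intro x
    simp only [hf, dotProduct, Matrix.mulVec, dotProduct, Finset.mul_sum]
    exact Finset.sum_congr rfl fun i _ => Finset.sum_congr rfl fun j _ => by ring
  have hne : (Metric.sphere (0 : E) 1).Nonempty := by
    refine ⟨EuclideanSpace.single ⟨0, hg⟩ (1 : ℝ), ?_⟩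
    rw [mem_sphere_iff_norm, sub_zero, EuclideanSpace.norm_single, norm_one]
  obtain ⟨u, hu, hmin'⟩ := (isCompact_sphere (0 : E) 1).exists_isMinOn hne hcont.continuousOn
  have hmin : ∀ y ∈ Metric.sphere (0 : E) 1, f u ≤ f y := fun y hy => hmin' hy
  have hunorm : ‖u‖ = 1 := by simpa using hu
  have hune : u ≠ 0 := fun h => by simp [h] at hunorm
  have hc : 0 < f u := by
    show 0 < f (WithLp.toLp 2 u.ofLp)
    rw [hfx]
    have := hM.dotProduct_mulVec_pos (x := u.ofLp) (by exact fun h => hune (by simpa using congrArg (WithLp.toLp 2) h))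
    simpa using this
  refine ⟨f u, hc, fun x => ?_⟩
  rcases eq_or_ne x 0 with rfl | hx
  · simp [hf]
  · set y : E := WithLp.toLp 2 x
    have hy : y ≠ 0 := fun h => hx (by simpa [y] using congrArg WithLp.ofLp h)
    have hyn : (0:ℝ) < ‖y‖ := norm_pos_iff.mpr hy
    set u' : E := ‖y‖⁻¹ • y
    have hu' : u' ∈ Metric.sphere (0 : E) 1 := by
      simp [u', norm_smul, abs_of_pos (inv_pos.mpr hyn), inv_mul_cancel₀ hyn.ne']
    have hscale : f y = ‖y‖ ^ 2 * f u' := by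
      simp only [hf, Finset.mul_sum]
      refine Finset.sum_congr rfl fun i _ => Finset.sum_congr rfl fun j _ => ?_
      have h1 : u' i = ‖y‖⁻¹ * y i := rfl
      have h2 : u' j = ‖y‖⁻¹ * y j := rfl
      rw [h1, h2]
      field_simp
    have hnorm2 : ‖y‖ ^ 2 = ∑ i, (x i) ^ 2 := by
      rw [EuclideanSpace.norm_eq, Real.sq_sqrt (Finset.sum_nonneg fun i _ => sq_nonneg _)]
      exact Finset.sum_congr rfl fun i _ => by simp [y, Real.norm_eq_abs, _root_.sq_abs]
    calc f u * ∑ i, (x i) ^ 2 ≤ f u' * ∑ i, (x i) ^ 2 := by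
          exact mul_le_mul_of_nonneg_right (hmin u' hu')
            (Finset.sum_nonneg fun i _ => sq_nonneg _)
      _ = f y := by rw [← hnorm2, mul_comm, ← hscale]

/-- For `τ` symmetric with positive definite imaginary part, the series defining the
Riemann theta function is absolutely summable (hence summable). -/
theorem statement0 (g : ℕ) (hg : 1 ≤ g) (τ : Matrix (Fin g) (Fin g) ℂ)
    (hsymm : τ.IsSymm)
    (hpos : (Matrix.of fun i j => (τ i j).im).PosDef) (z : Fin g → ℂ) :
    (Summable fun n : Fin g → ℤ =>
      ‖Complex.exp ((Real.pi : ℂ) * Complex.I * (∑ i, ∑ j, (n i : ℂ) * τ i j * (n j : ℂ)) +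
        2 * (Real.pi : ℂ) * Complex.I * (∑ i, (n i : ℂ) * z i))‖) ∧
    (Summable fun n : Fin g → ℤ =>
      Complex.exp ((Real.pi : ℂ) * Complex.I * (∑ i, ∑ j, (n i : ℂ) * τ i j * (n j : ℂ)) +
        2 * (Real.pi : ℂ) * Complex.I * (∑ i, (n i : ℂ) * z i))) := by
  obtain ⟨c, hc, hcle⟩ := lemC hg hpos
  set B : ℝ := ∑ j, |(z j).im| with hB
  have hB0 : 0 ≤ B := Finset.sum_nonneg fun j _ => abs_nonneg _
  have hπ := Real.pi_pos
  have key : Summable fun n : Fin g → ℤ =>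
      ‖Complex.exp ((Real.pi : ℂ) * Complex.I * (∑ i, ∑ j, (n i : ℂ) * τ i j * (n j : ℂ)) +
        2 * (Real.pi : ℂ) * Complex.I * (∑ i, (n i : ℂ) * z i))‖ := by
    refine Summable.of_nonneg_of_le (fun n => norm_nonneg _) (fun n => ?_)
      (lemB (a := Real.pi * c) (by positivity) (2 * Real.pi * B) g)
    rw [Complex.norm_exp]
    apply Real.exp_le_exp.mpr
    have hQ : (∑ i, ∑ j, (n i : ℂ) * τ i j * (n j : ℂ)).im
        = ∑ i, ∑ j, (n i : ℝ) * (τ i j).im * (n j : ℝ) := by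
      rw [Complex.im_sum]
      refine Finset.sum_congr rfl fun i _ => ?_
      rw [Complex.im_sum]
      refine Finset.sum_congr rfl fun j _ => ?_
      simp [Complex.mul_im, Complex.mul_re]
    have hL : (∑ i, (n i : ℂ) * z i).im = ∑ i, (n i : ℝ) * (z i).im := by
      rw [Complex.im_sum]
      exact Finset.sum_congr rfl fun i _ => by simp [Complex.mul_im]
    have hre : ((Real.pi : ℂ) * Complex.I * (∑ i, ∑ j, (n i : ℂ) * τ i j * (n j : ℂ)) +
        2 * (Real.pi : ℂ) * Complex.I * (∑ i, (n i : ℂ) * z i)).re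
        = -Real.pi * (∑ i, ∑ j, (n i : ℝ) * (τ i j).im * (n j : ℝ))
          - 2 * Real.pi * (∑ i, (n i : ℝ) * (z i).im) := by
      rw [Complex.add_re, Complex.mul_re, Complex.mul_re, ← hQ, ← hL]
      simp [Complex.mul_re, Complex.mul_im]
      ring
    rw [hre]
    have h1 : c * ∑ i, ((n i : ℝ)) ^ 2 ≤ ∑ i, ∑ j, (n i : ℝ) * (τ i j).im * (n j : ℝ) := by
      simpa using hcle (fun i => (n i : ℝ))
    have h2 : -(∑ i, (n i : ℝ) * (z i).im) ≤ ∑ i, |(n i : ℝ)| * B := by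
      rw [← Finset.sum_neg_distrib]
      refine Finset.sum_le_sum fun i _ => ?_
      calc -((n i : ℝ) * (z i).im) ≤ |(n i : ℝ) * (z i).im| := neg_le_abs _
        _ = |(n i : ℝ)| * |(z i).im| := abs_mul _ _
        _ ≤ |(n i : ℝ)| * B :=
            mul_le_mul_of_nonneg_left (Finset.single_le_sum (f := fun j => |(z j).im|)
              (fun j _ => abs_nonneg _) (Finset.mem_univ i)) (abs_nonneg _)
    have expand : (∑ i, (-(Real.pi * c) * (n i : ℝ) ^ 2 + 2 * Real.pi * B * |(n i : ℝ)|))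
        = -(Real.pi * c) * (∑ i, (n i : ℝ) ^ 2) + 2 * Real.pi * (∑ i, |(n i : ℝ)| * B) := by
      rw [Finset.sum_add_distrib, ← Finset.mul_sum, ← Finset.mul_sum, ← Finset.sum_mul]
      ring
    rw [expand]
    have t1 : -Real.pi * (∑ i, ∑ j, (n i : ℝ) * (τ i j).im * (n j : ℝ))
        ≤ -(Real.pi * c) * (∑ i, (n i : ℝ) ^ 2) := by
      have := mul_le_mul_of_nonneg_left h1 hπ.le
      nlinarith
    have t2 : -(2 * Real.pi * (∑ i, (n i : ℝ) * (z i).im))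
        ≤ 2 * Real.pi * (∑ i, |(n i : ℝ)| * B) := by
      have := mul_le_mul_of_nonneg_left h2 (by positivity : (0:ℝ) ≤ 2 * Real.pi)
      linarith
    linarith
  exact ⟨key, Summable.of_norm key⟩
end

section
/- Let τ ∈ H_g and let ε, δ ∈ ℤ^g with εᵀδ odd. Then the Riemann theta function vanishes at the odd two-torsion point m = (τε + δ)/2, i.e. θ(τ, (τε + δ)/2) = 0. -/
open Complex Matrix Finset Filter

/-- The two-torsion point `m = (τε + δ)/2 ∈ ℂ^g`. -/
noncomputable def torsionPt {g : ℕ} (τ : Matrix (Fin g) (Fin g) ℂ) (ε δ : Fin g → ℤ) :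
    Fin g → ℂ :=
  fun i => ((∑ j, τ i j * (ε j : ℂ)) + (δ i : ℂ)) / 2

/-- The Riemann theta function vanishes at every odd two-torsion point:
if `εᵀδ` is odd then `θ(τ, (τε+δ)/2) = 0`. -/
theorem statement5 (g : ℕ) (hg : 1 ≤ g) (τ : Matrix (Fin g) (Fin g) ℂ)
    (hsymm : τ.IsSymm)
    (hpos : (Matrix.of fun i j => (τ i j).im).PosDef)
    (ε δ : Fin g → ℤ) (hodd : Odd (∑ i, ε i * δ i)) :
    riemannTheta τ (torsionPt τ ε δ) = 0 := by
  classical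
  set m := torsionPt τ ε δ with hm
  set f : (Fin g → ℤ) → ℂ := fun n =>
    Complex.exp ((Real.pi : ℂ) * Complex.I * (∑ i, ∑ j, (n i : ℂ) * τ i j * (n j : ℂ)) +
      2 * (Real.pi : ℂ) * Complex.I * (∑ i, (n i : ℂ) * m i)) with hf
  have hτ : ∀ i j, τ j i = τ i j := fun i j => hsymm.apply i j
  have key : ∀ n : Fin g → ℤ, f (-n - ε) = - f n := by
    intro n
    set S : ℂ := ∑ i, ∑ j, (n i : ℂ) * τ i j * (n j : ℂ) with hS
    set U : ℂ := ∑ i, ∑ j, (n i : ℂ) * τ i j * (ε j : ℂ) with hU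
    set V : ℂ := ∑ i, ∑ j, (ε i : ℂ) * τ i j * (ε j : ℂ) with hV
    set D : ℂ := ∑ i, (n i : ℂ) * (δ i : ℂ) with hD
    set E : ℂ := ∑ i, (ε i : ℂ) * (δ i : ℂ) with hE
    have hcast : ∀ i, ((-n - ε) i : ℂ) = -(n i : ℂ) - (ε i : ℂ) := by
      intro i; simp [Pi.sub_apply, Pi.neg_apply]
    have hU' : (∑ i, ∑ j, (ε i : ℂ) * τ i j * (n j : ℂ)) = U := by
      rw [Finset.sum_comm, hU]
      refine Finset.sum_congr rfl fun i _ => Finset.sum_congr rfl fun j _ => ?_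
      rw [hτ i j]; ring
    have hA' : (∑ i, ∑ j, ((-n - ε) i : ℂ) * τ i j * ((-n - ε) j : ℂ))
        = S + 2 * U + V := by
      have : (∑ i, ∑ j, ((-n - ε) i : ℂ) * τ i j * ((-n - ε) j : ℂ))
          = ∑ i, ∑ j, ((n i : ℂ) * τ i j * (n j : ℂ) + (n i : ℂ) * τ i j * (ε j : ℂ)
              + (ε i : ℂ) * τ i j * (n j : ℂ) + (ε i : ℂ) * τ i j * (ε j : ℂ)) := by
        refine Finset.sum_congr rfl fun i _ => Finset.sum_congr rfl fun j _ => ?_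
        rw [hcast i, hcast j]; ring
      rw [this]
      simp only [Finset.sum_add_distrib]
      rw [hU']
      rw [hS, hU, hV]; ring
    have hmdef : ∀ i, m i = ((∑ j, τ i j * (ε j : ℂ)) + (δ i : ℂ)) / 2 := fun i => rfl
    have hB : (∑ i, (n i : ℂ) * m i) = (U + D) / 2 := by
      have : (∑ i, (n i : ℂ) * m i)
          = ∑ i, ((∑ j, (n i : ℂ) * τ i j * (ε j : ℂ)) + (n i : ℂ) * (δ i : ℂ)) / 2 := by
        refine Finset.sum_congr rfl fun i _ => ?_
        rw [hmdef i]
        have hms : (n i : ℂ) * (∑ j, τ i j * (ε j : ℂ)) = ∑ j, (n i : ℂ) * τ i j * (ε j : ℂ) := by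
          rw [Finset.mul_sum]
          exact Finset.sum_congr rfl fun j _ => (mul_assoc _ _ _).symm
        rw [← hms]; ring
      rw [this, ← Finset.sum_div, Finset.sum_add_distrib, hU, hD]
    have hBε : (∑ i, (ε i : ℂ) * m i) = (V + E) / 2 := by
      have : (∑ i, (ε i : ℂ) * m i)
          = ∑ i, ((∑ j, (ε i : ℂ) * τ i j * (ε j : ℂ)) + (ε i : ℂ) * (δ i : ℂ)) / 2 := by
        refine Finset.sum_congr rfl fun i _ => ?_
        rw [hmdef i]
        have hms : (ε i : ℂ) * (∑ j, τ i j * (ε j : ℂ)) = ∑ j, (ε i : ℂ) * τ i j * (ε j : ℂ) := by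
          rw [Finset.mul_sum]
          exact Finset.sum_congr rfl fun j _ => (mul_assoc _ _ _).symm
        rw [← hms]; ring
      rw [this, ← Finset.sum_div, Finset.sum_add_distrib, hV, hE]
    have hB' : (∑ i, ((-n - ε) i : ℂ) * m i) = -((U + D) / 2) - (V + E) / 2 := by
      have : (∑ i, ((-n - ε) i : ℂ) * m i)
          = ∑ i, (-( (n i : ℂ) * m i) - (ε i : ℂ) * m i) := by
        refine Finset.sum_congr rfl fun i _ => ?_
        rw [hcast i]; ring
      rw [this, Finset.sum_sub_distrib, Finset.sum_neg_distrib, hB, hBε]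
    set c : ℤ := -(2 * (∑ i, n i * δ i) + ∑ i, ε i * δ i) with hc
    have hcodd : Odd c := by
      refine Odd.neg ?_
      exact (even_two_mul _).add_odd hodd
    have hccast : (c : ℂ) = -(2 * D + E) := by
      rw [hc]; push_cast [hD, hE]; ring
    have hexp : (Real.pi : ℂ) * Complex.I * (S + 2 * U + V)
        + 2 * (Real.pi : ℂ) * Complex.I * (-((U + D) / 2) - (V + E) / 2)
        = ((Real.pi : ℂ) * Complex.I * S + 2 * (Real.pi : ℂ) * Complex.I * ((U + D) / 2))
          + (c : ℂ) * ((Real.pi : ℂ) * Complex.I) := by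
      rw [hccast]; ring
    have hm1 : Complex.exp ((c : ℂ) * ((Real.pi : ℂ) * Complex.I)) = -1 := by
      rw [Complex.exp_int_mul, Complex.exp_pi_mul_I]
      exact hcodd.neg_one_zpow
    simp only [hf]
    rw [hA', hB', hB, hexp, Complex.exp_add, hm1]
    ring
  let σ : (Fin g → ℤ) ≃ (Fin g → ℤ) :=
    { toFun := fun n => -n - ε
      invFun := fun n => -n - ε
      left_inv := fun n => by funext i; simp
      right_inv := fun n => by funext i; simp }
  have h2 : (∑' n, f n) = ∑' n, f (σ n) := (σ.tsum_eq f).symm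
  have h3 : (∑' n, f (σ n)) = - ∑' n, f n := by
    have : (fun n => f (σ n)) = fun n => - f n := by
      funext n; exact key n
    rw [this, tsum_neg]
  have h4 : (∑' n, f n) = 0 := by
    have h5 : (∑' n, f n) = - ∑' n, f n := h2.trans h3
    have : (2 : ℂ) * ∑' n, f n = 0 := by linear_combination h5
    have h2ne : (2 : ℂ) ≠ 0 := two_ne_zero
    exact (mul_eq_zero.mp this).resolve_left h2ne
  exact h4
end

section
/- Let g ≥ 2 and let τ ∈ H_g be written in block form τ = [[ω, bᵀ],[b, τ']] with ω ∈ ℂ, b ∈ ℂ^{g−1} and τ' a symmetric (g−1)×(g−1) matrix (so that Im τ' is positive definite and τ' ∈ H_{g−1}). Then for every z₁ ∈ ℂ and z' ∈ ℂ^{g−1}, the family (N ↦ e(ω)^{N(N−1)/2} · e(N z₁) · θ(τ', z' + N b)) indexed by N ∈ ℤ is summable, and θ(τ, (z₁ − ω/2, z')) = Σ_{N ∈ ℤ} e(ω)^{N(N−1)/2} · e(N z₁) · θ(τ', z' + N b), where (z₁ − ω/2, z') ∈ ℂ^g denotes the vector with first coordinate z₁ − ω/2 and remaining coordinates z'. 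-/
open Complex Matrix Finset Filter

/-- The block matrix `[[ω, bᵀ],[b, τ']]` of size `(h+1) × (h+1)`. -/
noncomputable def blockTau {h : ℕ} (ω : ℂ) (b : Fin h → ℂ)
    (τ' : Matrix (Fin h) (Fin h) ℂ) : Matrix (Fin (h + 1)) (Fin (h + 1)) ℂ :=
  Matrix.of (Fin.cons (Fin.cons ω b) (fun i => Fin.cons (b i) (τ' i)))

lemma quad_lower_bound {g : ℕ} (hg : 0 < g) (A : Matrix (Fin g) (Fin g) ℝ) (hA : A.PosDef) :
    ∃ c > 0, ∀ x : Fin g → ℝ, c * (∑ i, x i ^ 2) ≤ ∑ i, ∑ j, x i * A i j * x j := by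
  set f : (Fin g → ℝ) → ℝ := fun x => ∑ i, ∑ j, x i * A i j * x j with hf
  have hfq : ∀ x : Fin g → ℝ, f x = x ⬝ᵥ A.mulVec x := by
    intro x
    simp only [f, dotProduct, Matrix.mulVec, dotProduct, Finset.mul_sum]
    exact Finset.sum_congr rfl fun i _ => Finset.sum_congr rfl fun j _ => by ring
  have hfpos : ∀ x : Fin g → ℝ, x ≠ 0 → 0 < f x := by
    intro x hx
    rw [hfq]
    simpa using hA.dotProduct_mulVec_pos hx
  have hcont : Continuous f := by
    apply continuous_finset_sum; intro i _
    apply continuous_finset_sum; intro j _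
    exact ((continuous_apply i).mul continuous_const).mul (continuous_apply j)
  set S : Set (Fin g → ℝ) := {x | ∑ i, x i ^ 2 = 1} with hS
  have hcontq : Continuous fun x : Fin g → ℝ => ∑ i, x i ^ 2 := by
    apply continuous_finset_sum; intro i _; exact (continuous_apply i).pow 2
  have hSc : IsCompact S := by
    apply Metric.isCompact_of_isClosed_isBounded
    · exact isClosed_eq hcontq continuous_const
    · apply Bornology.IsBounded.subset (Metric.isBounded_closedBall (x := (0 : Fin g → ℝ)) (r := 1))
      intro x hx
      rw [Metric.mem_closedBall, dist_zero_right]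
      refine (pi_norm_le_iff_of_nonneg zero_le_one).mpr fun i => ?_
      rw [Real.norm_eq_abs, ← sq_le_one_iff_abs_le_one]
      calc x i ^ 2 ≤ ∑ j, x j ^ 2 :=
            Finset.single_le_sum (fun j _ => sq_nonneg (x j)) (Finset.mem_univ i)
        _ = 1 := hx
  have hSne : S.Nonempty := by
    refine ⟨fun i => if i = ⟨0, hg⟩ then 1 else 0, ?_⟩
    simp [hS, Finset.sum_ite_eq']
  obtain ⟨x₀, hx₀S, hmin'⟩ := hSc.exists_isMinOn hSne hcont.continuousOn
  have hmin : ∀ y ∈ S, f x₀ ≤ f y := fun y hy => hmin' hy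
  have hx₀ne : x₀ ≠ 0 := by
    intro h0
    have : (∑ i, x₀ i ^ 2) = 1 := hx₀S
    simp [h0] at this
  refine ⟨f x₀, hfpos x₀ hx₀ne, fun x => ?_⟩
  rcases eq_or_ne x 0 with rfl | hx
  · simp
  · have hq : 0 < ∑ i, x i ^ 2 := by
      have : ∃ i, x i ≠ 0 := by
        by_contra hc; push_neg at hc; exact hx (funext hc)
      obtain ⟨i, hi⟩ := this
      refine Finset.sum_pos' (fun j _ => sq_nonneg _) ⟨i, Finset.mem_univ i, ?_⟩
      positivity
    set r : ℝ := Real.sqrt (∑ i, x i ^ 2) with hr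
    have hrpos : 0 < r := Real.sqrt_pos.mpr hq
    have hr2 : r ^ 2 = ∑ i, x i ^ 2 := Real.sq_sqrt hq.le
    set y : Fin g → ℝ := fun i => r⁻¹ * x i with hy
    have hyS : y ∈ S := by
      show (∑ i, y i ^ 2) = 1
      have : ∑ i, y i ^ 2 = r⁻¹ ^ 2 * ∑ i, x i ^ 2 := by
        rw [Finset.mul_sum]; exact Finset.sum_congr rfl fun i _ => by simp [hy]; ring
      rw [this, ← hr2]
      field_simp
    have hyfx : f x = r ^ 2 * f y := by
      simp only [f, Finset.mul_sum]
      refine Finset.sum_congr rfl fun i _ => Finset.sum_congr rfl fun j _ => ?_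
      simp only [hy]
      field_simp
    calc f x₀ * ∑ i, x i ^ 2 = (∑ i, x i ^ 2) * f x₀ := by ring
    _ ≤ (∑ i, x i ^ 2) * f y := by
        exact mul_le_mul_of_nonneg_left (hmin y hyS) hq.le
    _ = f x := by rw [hyfx, hr2]

lemma summable_phi {c M : ℝ} (hc : 0 < c) :
    Summable fun k : ℤ => Real.exp (-Real.pi * (c * (k : ℝ) ^ 2 - 2 * M * |(k : ℝ)|)) := by
  have := summable_pow_mul_jacobiTheta₂_term_bound M hc 0
  simpa using this

lemma summable_prod_pi {φ : ℤ → ℝ} (h0 : ∀ k, 0 ≤ φ k) (hφ : Summable φ) :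
    ∀ g : ℕ, Summable fun n : Fin g → ℤ => ∏ i, φ (n i) := by
  intro g
  induction g with
  | zero => exact Summable.of_finite
  | succ g ih =>
    have h1 : (0 : ℤ → ℝ) ≤ φ := h0
    have h2 : (0 : (Fin g → ℤ) → ℝ) ≤ fun n => ∏ i, φ (n i) :=
      fun m => Finset.prod_nonneg fun i _ => h0 _
    have key : Summable fun p : ℤ × (Fin g → ℤ) => φ p.1 * ∏ i, φ (p.2 i) :=
      Summable.mul_of_nonneg (f := φ) (g := fun n : Fin g → ℤ => ∏ i, φ (n i)) hφ ih h1 h2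
    rw [← (Fin.consEquiv (fun _ : Fin (g + 1) => ℤ)).summable_iff]
    have heq : ((fun n : Fin (g + 1) → ℤ => ∏ i, φ (n i)) ∘ (Fin.consEquiv fun _ => ℤ)) =
        fun p : ℤ × (Fin g → ℤ) => φ p.1 * ∏ i, φ (p.2 i) := by
      funext p
      simp [Fin.consEquiv, Fin.prod_univ_succ]
    rw [heq]
    exact key

lemma summable_theta_term {g : ℕ} (hg : 0 < g) (τ : Matrix (Fin g) (Fin g) ℂ)
    (hpos : (Matrix.of fun i j => (τ i j).im).PosDef) (z : Fin g → ℂ) :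
    Summable fun n : Fin g → ℤ =>
      Complex.exp ((Real.pi : ℂ) * Complex.I * (∑ i, ∑ j, (n i : ℂ) * τ i j * (n j : ℂ)) +
        2 * (Real.pi : ℂ) * Complex.I * (∑ i, (n i : ℂ) * z i)) := by
  obtain ⟨c, hc, hbound⟩ := quad_lower_bound hg _ hpos
  obtain ⟨M, hM⟩ : ∃ M : ℝ, ∀ i, |(z i).im| ≤ M :=
    ⟨∑ i, |(z i).im|,
      fun i => Finset.single_le_sum (fun j _ => abs_nonneg ((z j).im)) (Finset.mem_univ i)⟩
  set φ : ℤ → ℝ := fun k => Real.exp (-Real.pi * (c * (k : ℝ) ^ 2 - 2 * M * |(k : ℝ)|)) with hφdef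
  refine Summable.of_norm_bounded (g := fun n : Fin g → ℤ => ∏ i, φ (n i))
    (summable_prod_pi (fun k => Real.exp_nonneg _) (summable_phi hc) g) fun n => ?_
  set Q : ℂ := ∑ i, ∑ j, (n i : ℂ) * τ i j * (n j : ℂ) with hQdef
  set L : ℂ := ∑ i, (n i : ℂ) * z i with hLdef
  have hw : ((Real.pi : ℂ) * Complex.I * Q + 2 * (Real.pi : ℂ) * Complex.I * L) =
      ((Real.pi : ℝ) : ℂ) * Q * Complex.I + (((2 * Real.pi : ℝ)) : ℂ) * L * Complex.I := by
    push_cast; ring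
  have hnorm : ‖Complex.exp ((Real.pi : ℂ) * Complex.I * Q + 2 * (Real.pi : ℂ) * Complex.I * L)‖
      = Real.exp (-(Real.pi * Q.im) + -(2 * Real.pi * L.im)) := by
    rw [Complex.norm_exp, hw, Complex.add_re, Complex.mul_I_re,
      Complex.mul_I_re, Complex.im_ofReal_mul, Complex.im_ofReal_mul]
  have hQim : Q.im = ∑ i, ∑ j, ((n i : ℝ) * (τ i j).im * (n j : ℝ)) := by
    rw [hQdef, Complex.im_sum]
    refine Finset.sum_congr rfl fun i _ => ?_
    rw [Complex.im_sum]
    refine Finset.sum_congr rfl fun j _ => ?_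
    simp [Complex.mul_im, Complex.mul_re]
  have hLim : L.im = ∑ i, (n i : ℝ) * (z i).im := by
    rw [hLdef, Complex.im_sum]
    refine Finset.sum_congr rfl fun i _ => ?_
    simp [Complex.mul_im]
  rw [hnorm, hQim, hLim]
  have key : -(Real.pi * (∑ i, ∑ j, ((n i : ℝ) * (τ i j).im * (n j : ℝ))))
      + -(2 * Real.pi * ∑ i, (n i : ℝ) * (z i).im)
      ≤ ∑ i, -Real.pi * (c * (n i : ℝ) ^ 2 - 2 * M * |(n i : ℝ)|) := by
    have h1 : c * (∑ i, (n i : ℝ) ^ 2) ≤ ∑ i, ∑ j, ((n i : ℝ) * (τ i j).im * (n j : ℝ)) := by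
      have := hbound (fun i => (n i : ℝ))
      simpa [Matrix.of_apply] using this
    have h2 : -(∑ i, (n i : ℝ) * (z i).im) ≤ ∑ i, |(n i : ℝ)| * M := by
      rw [← Finset.sum_neg_distrib]
      refine Finset.sum_le_sum fun i _ => ?_
      calc -((n i : ℝ) * (z i).im) ≤ |(n i : ℝ) * (z i).im| := neg_le_abs _
        _ = |(n i : ℝ)| * |(z i).im| := abs_mul _ _
        _ ≤ |(n i : ℝ)| * M := mul_le_mul_of_nonneg_left (hM i) (abs_nonneg _)
    have expand : ∑ i, -Real.pi * (c * (n i : ℝ) ^ 2 - 2 * M * |(n i : ℝ)|)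
        = -(Real.pi * (c * ∑ i, (n i : ℝ) ^ 2)) + 2 * Real.pi * ∑ i, |(n i : ℝ)| * M := by
      rw [show -(Real.pi * (c * ∑ i, (n i : ℝ) ^ 2)) = ∑ i, -(Real.pi * (c * (n i : ℝ) ^ 2)) by
            rw [Finset.mul_sum, Finset.mul_sum, Finset.sum_neg_distrib],
        Finset.mul_sum, ← Finset.sum_add_distrib]
      refine Finset.sum_congr rfl fun i _ => by ring
    rw [expand]
    have t1 : -(Real.pi * (∑ i, ∑ j, ((n i : ℝ) * (τ i j).im * (n j : ℝ))))
        ≤ -(Real.pi * (c * ∑ i, (n i : ℝ) ^ 2)) := by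
      apply neg_le_neg
      exact mul_le_mul_of_nonneg_left h1 Real.pi_pos.le
    have t2 : -(2 * Real.pi * ∑ i, (n i : ℝ) * (z i).im) ≤ 2 * Real.pi * ∑ i, |(n i : ℝ)| * M := by
      rw [← mul_neg]
      exact mul_le_mul_of_nonneg_left h2 (by positivity)
    linarith
  calc Real.exp _ ≤ Real.exp (∑ i, -Real.pi * (c * (n i : ℝ) ^ 2 - 2 * M * |(n i : ℝ)|)) :=
        Real.exp_le_exp.mpr key
    _ = ∏ i, φ (n i) := by rw [Real.exp_sum]

-- the key algebraic identity
lemma term_eq (h : ℕ) (ω : ℂ) (b : Fin h → ℂ) (τ' : Matrix (Fin h) (Fin h) ℂ)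
    (z₁ : ℂ) (z' : Fin h → ℂ) (N : ℤ) (m : Fin h → ℤ) :
    Complex.exp ((Real.pi : ℂ) * Complex.I *
        (∑ i, ∑ j, ((Fin.cons N m : Fin (h+1) → ℤ) i : ℂ) * blockTau ω b τ' i j *
          ((Fin.cons N m : Fin (h+1) → ℤ) j : ℂ)) +
      2 * (Real.pi : ℂ) * Complex.I *
        (∑ i, ((Fin.cons N m : Fin (h+1) → ℤ) i : ℂ) * (Fin.cons (z₁ - ω / 2) z' : Fin (h+1) → ℂ) i)) =
    Complex.exp (2 * (Real.pi : ℂ) * Complex.I * ω) ^ (N * (N - 1) / 2) *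
      Complex.exp (2 * (Real.pi : ℂ) * Complex.I * ((N : ℂ) * z₁)) *
      Complex.exp ((Real.pi : ℂ) * Complex.I * (∑ i, ∑ j, (m i : ℂ) * τ' i j * (m j : ℂ)) +
        2 * (Real.pi : ℂ) * Complex.I * (∑ i, (m i : ℂ) * (z' i + (N : ℂ) * b i))) := by
  set k : ℤ := N * (N - 1) / 2 with hkdef
  have hdvd : (2 : ℤ) ∣ N * (N - 1) := by
    rw [mul_comm]
    have : Even ((N - 1) * (N - 1 + 1)) := Int.even_mul_succ_self (N - 1)
    rw [sub_add_cancel] at this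
    exact this.two_dvd
  have hk2 : k * 2 = N * (N - 1) := Int.ediv_mul_cancel hdvd
  have hk : (k : ℂ) * 2 = (N : ℂ) * ((N : ℂ) - 1) := by
    exact_mod_cast congrArg (Int.cast : ℤ → ℂ) hk2
  rw [← Complex.exp_int_mul, ← Complex.exp_add, ← Complex.exp_add]
  congr 1
  set S : ℂ := ∑ i, (m i : ℂ) * b i with hSdef
  set Q' : ℂ := ∑ i, ∑ j, (m i : ℂ) * τ' i j * (m j : ℂ) with hQ'def
  set L' : ℂ := ∑ i, (m i : ℂ) * z' i with hL'def
  have hQ : (∑ i, ∑ j, ((Fin.cons N m : Fin (h+1) → ℤ) i : ℂ) * blockTau ω b τ' i j *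
      ((Fin.cons N m : Fin (h+1) → ℤ) j : ℂ)) = (N : ℂ) * N * ω + 2 * N * S + Q' := by
    simp only [Fin.sum_univ_succ, Fin.cons_zero, Fin.cons_succ, blockTau, Matrix.of_apply]
    rw [Finset.sum_add_distrib]
    have e1 : ∑ j, (N : ℂ) * b j * (m j : ℂ) = N * S := by
      rw [hSdef, Finset.mul_sum]
      exact Finset.sum_congr rfl fun j _ => by ring
    have e2 : ∑ i, (m i : ℂ) * b i * (N : ℂ) = N * S := by
      rw [hSdef, Finset.mul_sum]
      exact Finset.sum_congr rfl fun j _ => by ring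
    rw [e1, e2, hQ'def]
    ring
  have hL : (∑ i, ((Fin.cons N m : Fin (h+1) → ℤ) i : ℂ) *
      (Fin.cons (z₁ - ω / 2) z' : Fin (h+1) → ℂ) i) = (N : ℂ) * (z₁ - ω / 2) + L' := by
    simp only [Fin.sum_univ_succ, Fin.cons_zero, Fin.cons_succ, hL'def]
  have hsplit : (∑ i, (m i : ℂ) * (z' i + (N : ℂ) * b i)) = L' + N * S := by
    rw [hL'def, hSdef, Finset.mul_sum, ← Finset.sum_add_distrib]
    exact Finset.sum_congr rfl fun i _ => by ring
  rw [hQ, hL, hsplit]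
  push_cast
  linear_combination (-((Real.pi : ℂ) * Complex.I * ω)) * hk


/-- Fourier–Jacobi type expansion: for `τ = [[ω, bᵀ],[b, τ']] ∈ H_g` (`g = h+1 ≥ 2`),
the family `N ↦ e(ω)^{N(N−1)/2} e(Nz₁) θ(τ', z' + Nb)` is summable and
`θ(τ, (z₁ − ω/2, z')) = Σ_{N ∈ ℤ} e(ω)^{N(N−1)/2} e(Nz₁) θ(τ', z' + Nb)`. -/
theorem statement7 (h : ℕ) (hh : 1 ≤ h) (ω : ℂ) (b : Fin h → ℂ)
    (τ' : Matrix (Fin h) (Fin h) ℂ) (hsymm' : τ'.IsSymm)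
    (hsymm : (blockTau ω b τ').IsSymm)
    (hpos : (Matrix.of fun i j => ((blockTau ω b τ') i j).im).PosDef)
    (z₁ : ℂ) (z' : Fin h → ℂ) :
    (Summable fun N : ℤ =>
      Complex.exp (2 * (Real.pi : ℂ) * Complex.I * ω) ^ (N * (N - 1) / 2) *
        Complex.exp (2 * (Real.pi : ℂ) * Complex.I * ((N : ℂ) * z₁)) *
        riemannTheta τ' (fun i => z' i + (N : ℂ) * b i)) ∧
    riemannTheta (blockTau ω b τ') (Fin.cons (z₁ - ω / 2) z') =
      ∑' N : ℤ,
        Complex.exp (2 * (Real.pi : ℂ) * Complex.I * ω) ^ (N * (N - 1) / 2) *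
          Complex.exp (2 * (Real.pi : ℂ) * Complex.I * ((N : ℂ) * z₁)) *
          riemannTheta τ' (fun i => z' i + (N : ℂ) * b i) := by
  set z : Fin (h + 1) → ℂ := Fin.cons (z₁ - ω / 2) z' with hzdef
  set F : (Fin (h + 1) → ℤ) → ℂ := fun n =>
    Complex.exp ((Real.pi : ℂ) * Complex.I *
        (∑ i, ∑ j, (n i : ℂ) * blockTau ω b τ' i j * (n j : ℂ)) +
      2 * (Real.pi : ℂ) * Complex.I * (∑ i, (n i : ℂ) * z i)) with hFdef
  have hFsum : Summable F := summable_theta_term (Nat.succ_pos h) _ hpos z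
  set e : (ℤ × (Fin h → ℤ)) ≃ (Fin (h + 1) → ℤ) := Fin.consEquiv (fun _ => ℤ) with hedef
  have he : ∀ (N : ℤ) (m : Fin h → ℤ), e (N, m) = Fin.cons N m := fun N m => rfl
  have hF2 : Summable (F ∘ e) := e.summable_iff.mpr hFsum
  have hfib : ∀ N : ℤ, HasSum (fun m : Fin h → ℤ => (F ∘ e) (N, m))
      (Complex.exp (2 * (Real.pi : ℂ) * Complex.I * ω) ^ (N * (N - 1) / 2) *
        Complex.exp (2 * (Real.pi : ℂ) * Complex.I * ((N : ℂ) * z₁)) *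
        riemannTheta τ' (fun i => z' i + (N : ℂ) * b i)) := by
    intro N
    have hs : Summable fun m : Fin h → ℤ => (F ∘ e) (N, m) := hF2.prod_factor N
    have heq : (fun m : Fin h → ℤ => (F ∘ e) (N, m)) = fun m =>
        (Complex.exp (2 * (Real.pi : ℂ) * Complex.I * ω) ^ (N * (N - 1) / 2) *
          Complex.exp (2 * (Real.pi : ℂ) * Complex.I * ((N : ℂ) * z₁))) *
        Complex.exp ((Real.pi : ℂ) * Complex.I * (∑ i, ∑ j, (m i : ℂ) * τ' i j * (m j : ℂ)) +
          2 * (Real.pi : ℂ) * Complex.I * (∑ i, (m i : ℂ) * (z' i + (N : ℂ) * b i))) := by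
      funext m
      show F (e (N, m)) = _
      rw [he, hFdef, hzdef]
      exact term_eq h ω b τ' z₁ z' N m
    have := hs.hasSum
    rw [heq] at this ⊢
    rw [tsum_mul_left] at this
    unfold riemannTheta
    exact this
  have hprod : HasSum (F ∘ e) (riemannTheta (blockTau ω b τ') z) :=
    e.hasSum_iff.mpr hFsum.hasSum
  have main := HasSum.prod_fiberwise hprod hfib
  exact ⟨main.summable, main.tsum_eq.symm⟩
end

section
/- Let h ≥ 1, τ ∈ H_h and b ∈ ℂ^h, and define T(z,x) := θ(τ,z) + x·θ(τ,z+b) for z ∈ ℂ^h and x ∈ ℂ. Then for every z ∈ ℂ^h and every nonzero x ∈ ℂ one has T(−b − z, x⁻¹) = x⁻¹ · T(z, x); that is, the semi-abelic theta function of a torus rank one degeneration is invariant, up to the factor x⁻¹, under the involution j(z,x) = (−b−z, x⁻¹). -/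
open Complex Matrix Finset Filter

/-- The semi-abelic theta function of a torus rank one degeneration:
`T(z,x) = θ(τ,z) + x θ(τ, z+b)`. -/
noncomputable def Trk1 {h : ℕ} (τ : Matrix (Fin h) (Fin h) ℂ) (b : Fin h → ℂ)
    (z : Fin h → ℂ) (x : ℂ) : ℂ :=
  riemannTheta τ z + x * riemannTheta τ (z + b)

lemma riemannTheta_neg {g : ℕ} (τ : Matrix (Fin g) (Fin g) ℂ) (z : Fin g → ℂ) :
    riemannTheta τ (-z) = riemannTheta τ z := by
  unfold riemannTheta
  rw [← (Equiv.neg (Fin g → ℤ)).tsum_eq]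
  congr 1
  funext n
  simp [Equiv.neg_apply, mul_comm]

/-- The semi-abelic theta function of a torus rank one degeneration is invariant, up to
the factor `x⁻¹`, under the involution `j(z,x) = (−b−z, x⁻¹)`:
`T(−b−z, x⁻¹) = x⁻¹ T(z,x)` for `x ≠ 0`. -/
theorem statement9 (h : ℕ) (hh : 1 ≤ h) (τ : Matrix (Fin h) (Fin h) ℂ)
    (hsymm : τ.IsSymm)
    (hpos : (Matrix.of fun i j => (τ i j).im).PosDef)
    (b : Fin h → ℂ) (z : Fin h → ℂ) (x : ℂ) (hx : x ≠ 0) :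
    Trk1 τ b (-b - z) x⁻¹ = x⁻¹ * Trk1 τ b z x := by
  unfold Trk1
  have h1 : -b - z = -(z + b) := by ring
  have h2 : -(z + b) + b = -z := by ring
  rw [h1, h2, riemannTheta_neg, riemannTheta_neg]
  field_simp
  ring
end

section
/- Let h ≥ 1, τ ∈ H_h, b ∈ ℂ^h, and define T(z,x) := θ(τ,z) + x·θ(τ,z+b). Let ε, δ ∈ ℤ^h, set m := (τε + δ)/2, and let σ ∈ {1, −1}. Then T(−m − b/2, σ·exp(−πi·εᵀb)) = exp(−πi·εᵀb) · ((−1)^{εᵀδ} + σ) · θ(τ, −m + b/2). In particular, this value of T vanishes whenever σ = −(−1)^{εᵀδ}: the fixed point of the involution with that sign lies on the semi-abelic theta divisor. -/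
open Complex Matrix Finset Filter

lemma theta_flip {h : ℕ} (τ : Matrix (Fin h) (Fin h) ℂ) (hsymm : τ.IsSymm)
    (b : Fin h → ℂ) (ε δ : Fin h → ℤ) :
    riemannTheta τ (fun i => -torsionPt τ ε δ i - b i / 2) =
      Complex.exp (-(Real.pi : ℂ) * Complex.I * (∑ i, (ε i : ℂ) * b i)) *
        (-1 : ℂ) ^ (∑ i, ε i * δ i) *
        riemannTheta τ (fun i => -torsionPt τ ε δ i + b i / 2) := by
  unfold riemannTheta torsionPt
  rw [← Equiv.tsum_eq (Equiv.subLeft ε), ← tsum_mul_left]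
  refine tsum_congr fun k => ?_
  simp only [Equiv.subLeft_apply, Pi.sub_apply, Int.cast_sub]
  set c : ℂ := (Real.pi : ℂ) * Complex.I with hc
  have hswap : (∑ i, ∑ j, (k i : ℂ) * τ i j * (ε j : ℂ))
      = ∑ i, ∑ j, (ε i : ℂ) * τ i j * (k j : ℂ) := by
    rw [Finset.sum_comm]
    refine Finset.sum_congr rfl fun i _ => Finset.sum_congr rfl fun j _ => ?_
    rw [hsymm.apply i j]; ring
  have hS : ∀ u : Fin h → ℤ, (∑ i, (u i : ℂ) * ∑ j, τ i j * (ε j : ℂ))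
      = ∑ i, ∑ j, (u i : ℂ) * τ i j * (ε j : ℂ) := by
    intro u
    refine Finset.sum_congr rfl fun i _ => ?_
    rw [Finset.mul_sum]
    exact Finset.sum_congr rfl fun j _ => by ring
  have e1 : (∑ x, ∑ y, ((ε x : ℂ) - (k x : ℂ)) * τ x y * ((ε y : ℂ) - (k y : ℂ)))
      = (∑ i, ∑ j, (ε i : ℂ) * τ i j * (ε j : ℂ)) - (∑ i, ∑ j, (ε i : ℂ) * τ i j * (k j : ℂ))
        - (∑ i, ∑ j, (k i : ℂ) * τ i j * (ε j : ℂ))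
        + (∑ i, ∑ j, (k i : ℂ) * τ i j * (k j : ℂ)) := by
    simp only [sub_mul, mul_sub, Finset.sum_sub_distrib]
    ring
  have e2 : (∑ x, ((ε x : ℂ) - (k x : ℂ)) *
        (-(((∑ j, τ x j * (ε j : ℂ)) + (δ x : ℂ)) / 2) - b x / 2))
      = (-(∑ i, (ε i : ℂ) * ∑ j, τ i j * (ε j : ℂ)) + (∑ i, (k i : ℂ) * ∑ j, τ i j * (ε j : ℂ))
         - (∑ i, (ε i : ℂ) * (δ i : ℂ)) + (∑ i, (k i : ℂ) * (δ i : ℂ))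
         - (∑ i, (ε i : ℂ) * b i) + (∑ i, (k i : ℂ) * b i)) / 2 := by
    rw [Finset.sum_congr rfl fun x _ => show ((ε x : ℂ) - (k x : ℂ)) *
        (-(((∑ j, τ x j * (ε j : ℂ)) + (δ x : ℂ)) / 2) - b x / 2)
      = (-((ε x : ℂ) * ∑ j, τ x j * (ε j : ℂ)) + (k x : ℂ) * ∑ j, τ x j * (ε j : ℂ)
          - (ε x : ℂ) * (δ x : ℂ) + (k x : ℂ) * (δ x : ℂ)
          - (ε x : ℂ) * b x + (k x : ℂ) * b x) / 2 from by ring]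
    rw [← Finset.sum_div]
    simp only [Finset.sum_add_distrib, Finset.sum_sub_distrib, Finset.sum_neg_distrib]
  have harg : c * (∑ x, ∑ y, ((ε x : ℂ) - (k x : ℂ)) * τ x y * ((ε y : ℂ) - (k y : ℂ))) +
        2 * (Real.pi : ℂ) * Complex.I * (∑ x, ((ε x : ℂ) - (k x : ℂ)) *
          (-(((∑ j, τ x j * (ε j : ℂ)) + (δ x : ℂ)) / 2) - b x / 2))
      = (c * (∑ i, ∑ j, (k i : ℂ) * τ i j * (k j : ℂ)) +
          2 * (Real.pi : ℂ) * Complex.I * (∑ x, (k x : ℂ) *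
            (-(((∑ j, τ x j * (ε j : ℂ)) + (δ x : ℂ)) / 2) + b x / 2))) +
        ((∑ i, k i * δ i : ℤ) : ℂ) * (2 * (Real.pi : ℂ) * Complex.I) +
        ((-(∑ i, ε i * δ i) : ℤ) : ℂ) * c +
        (-(Real.pi : ℂ) * Complex.I * (∑ i, (ε i : ℂ) * b i)) := by
    rw [e1, e2, hS ε, hS k, hswap,
      Finset.sum_congr rfl fun x _ => show (k x : ℂ) *
          (-(((∑ j, τ x j * (ε j : ℂ)) + (δ x : ℂ)) / 2) + b x / 2)
        = (-((k x : ℂ) * ∑ j, τ x j * (ε j : ℂ)) - (k x : ℂ) * (δ x : ℂ)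
            + (k x : ℂ) * b x) / 2 from by ring,
      show (∑ x, (-((k x : ℂ) * ∑ j, τ x j * (ε j : ℂ)) - (k x : ℂ) * (δ x : ℂ)
            + (k x : ℂ) * b x) / 2)
          = (-(∑ i, (k i : ℂ) * ∑ j, τ i j * (ε j : ℂ)) - (∑ i, (k i : ℂ) * (δ i : ℂ))
              + (∑ i, (k i : ℂ) * b i)) / 2 from by
        rw [← Finset.sum_div]
        simp only [Finset.sum_add_distrib, Finset.sum_sub_distrib, Finset.sum_neg_distrib],
      hS k, hswap]
    push_cast
    ring
  rw [harg, Complex.exp_add, Complex.exp_add, Complex.exp_add,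
    Complex.exp_int_mul_two_pi_mul_I, Complex.exp_int_mul, hc, Complex.exp_pi_mul_I]
  rw [_root_.zpow_neg, ← _root_.inv_zpow, inv_neg, inv_one]
  ring


/-- Evaluation of the rank one semi-abelic theta function at the fixed points of the
involution: `T(−m−b/2, σ exp(−πi εᵀb)) = exp(−πi εᵀb)((−1)^{εᵀδ} + σ) θ(τ, −m+b/2)`;
in particular it vanishes when `σ = −(−1)^{εᵀδ}`. -/
theorem statement10 (h : ℕ) (hh : 1 ≤ h) (τ : Matrix (Fin h) (Fin h) ℂ)
    (hsymm : τ.IsSymm)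
    (hpos : (Matrix.of fun i j => (τ i j).im).PosDef)
    (b : Fin h → ℂ) (ε δ : Fin h → ℤ) (σ : ℂ) (hσ : σ = 1 ∨ σ = -1) :
    Trk1 τ b (fun i => -torsionPt τ ε δ i - b i / 2)
        (σ * Complex.exp (-(Real.pi : ℂ) * Complex.I * (∑ i, (ε i : ℂ) * b i))) =
      Complex.exp (-(Real.pi : ℂ) * Complex.I * (∑ i, (ε i : ℂ) * b i)) *
        ((-1 : ℂ) ^ (∑ i, ε i * δ i) + σ) *
        riemannTheta τ (fun i => -torsionPt τ ε δ i + b i / 2) ∧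
    (σ = -(-1 : ℂ) ^ (∑ i, ε i * δ i) →
      Trk1 τ b (fun i => -torsionPt τ ε δ i - b i / 2)
        (σ * Complex.exp (-(Real.pi : ℂ) * Complex.I * (∑ i, (ε i : ℂ) * b i))) = 0) := by
  have hz : (fun i => -torsionPt τ ε δ i - b i / 2) + b
      = fun i => -torsionPt τ ε δ i + b i / 2 := by
    funext i
    simp only [Pi.add_apply]
    ring
  have main : Trk1 τ b (fun i => -torsionPt τ ε δ i - b i / 2)
        (σ * Complex.exp (-(Real.pi : ℂ) * Complex.I * (∑ i, (ε i : ℂ) * b i))) =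
      Complex.exp (-(Real.pi : ℂ) * Complex.I * (∑ i, (ε i : ℂ) * b i)) *
        ((-1 : ℂ) ^ (∑ i, ε i * δ i) + σ) *
        riemannTheta τ (fun i => -torsionPt τ ε δ i + b i / 2) := by
    unfold Trk1
    rw [hz, theta_flip τ hsymm b ε δ]
    ring
  refine ⟨main, fun hσ' => ?_⟩
  rw [main, hσ']
  ring
end

section
/- Let h ≥ 1, τ ∈ H_h, b ∈ ℂ^h, and define T(z,x) := θ(τ,z) + x·θ(τ,z+b) on ℂ^h × ℂ. Let ε, δ ∈ ℤ^h with εᵀδ odd, set m := (τε + δ)/2 and x₀ := exp(−πi·εᵀb). Then the total (Fréchet) derivative of T at the point (−m − b/2, x₀) vanishes if and only if θ(τ, −m + b/2) = 0 and the derivative of the function z ↦ θ(τ,z) at −m + b/2 vanishes; that is, the gradient of the semi-abelic theta function vanishes at this fixed point of the involution if and only if −m + b/2 is a singular point of the theta divisor of τ. -/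
open Complex Matrix Finset Filter

namespace RTAux

variable {h : ℕ}

/-- term of the theta series -/
noncomputable def thTerm (τ : Matrix (Fin h) (Fin h) ℂ) (n : Fin h → ℤ) (z : Fin h → ℂ) : ℂ :=
  Complex.exp ((Real.pi : ℂ) * Complex.I * (∑ i, ∑ j, (n i : ℂ) * τ i j * (n j : ℂ)) +
      2 * (Real.pi : ℂ) * Complex.I * (∑ i, (n i : ℂ) * z i))

lemma riemannTheta_eq (τ : Matrix (Fin h) (Fin h) ℂ) (z : Fin h → ℂ) :
    riemannTheta τ z = ∑' n : Fin h → ℤ, thTerm τ n z := rfl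

/-- continuous linear functional z ↦ ∑ a i * z i -/
noncomputable def linC (a : Fin h → ℂ) : (Fin h → ℂ) →L[ℂ] ℂ :=
  ∑ i, a i • ContinuousLinearMap.proj i

lemma linC_apply (a z : Fin h → ℂ) : linC a z = ∑ i, a i * z i := by
  simp [linC]

lemma hasFDerivAt_cexp_linC (c : ℂ) (a z : Fin h → ℂ) :
    HasFDerivAt (fun z => Complex.exp (c + linC a z))
      (Complex.exp (c + linC a z) • linC a) z :=
  (Complex.hasDerivAt_exp _).comp_hasFDerivAt z ((linC a).hasFDerivAt.const_add c)

lemma norm_proj_le (i : Fin h) :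
    ‖(ContinuousLinearMap.proj i : (Fin h → ℂ) →L[ℂ] ℂ)‖ ≤ 1 :=
  ContinuousLinearMap.opNorm_le_bound _ zero_le_one fun x => by
    simpa using norm_le_pi_norm x i

lemma norm_linC_le (a : Fin h → ℂ) : ‖linC a‖ ≤ ∑ i, ‖a i‖ := by
  refine ContinuousLinearMap.opNorm_le_bound _ (by positivity) fun x => ?_
  rw [linC_apply]
  calc ‖∑ i, a i * x i‖ ≤ ∑ i, ‖a i * x i‖ := norm_sum_le _ _
    _ ≤ ∑ i, ‖a i‖ * ‖x‖ := Finset.sum_le_sum fun i _ => by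
          rw [norm_mul]; gcongr; exact norm_le_pi_norm x i
    _ = (∑ i, ‖a i‖) * ‖x‖ := by rw [Finset.sum_mul]

/-- derivative of a theta term -/
lemma hasFDerivAt_thTerm (τ : Matrix (Fin h) (Fin h) ℂ) (n : Fin h → ℤ) (z : Fin h → ℂ) :
    HasFDerivAt (thTerm τ n)
      (thTerm τ n z • linC (fun i => 2 * (Real.pi : ℂ) * Complex.I * (n i : ℂ))) z := by
  have key : thTerm τ n = fun z => Complex.exp
      ((Real.pi : ℂ) * Complex.I * (∑ i, ∑ j, (n i : ℂ) * τ i j * (n j : ℂ)) +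
        linC (fun i => 2 * (Real.pi : ℂ) * Complex.I * (n i : ℂ)) z) := by
    funext z
    unfold thTerm
    rw [linC_apply]
    congr 2
    rw [Finset.mul_sum]
    exact Finset.sum_congr rfl fun i _ => by ring
  rw [key]
  exact hasFDerivAt_cexp_linC
    ((Real.pi : ℂ) * Complex.I * (∑ i, ∑ j, (n i : ℂ) * τ i j * (n j : ℂ)))
    (fun i => 2 * (Real.pi : ℂ) * Complex.I * (n i : ℂ)) z


lemma term_re (τ : Matrix (Fin h) (Fin h) ℂ) (n : Fin h → ℤ) (z : Fin h → ℂ) :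
    ((Real.pi : ℂ) * Complex.I * (∑ i, ∑ j, (n i : ℂ) * τ i j * (n j : ℂ)) +
      2 * (Real.pi : ℂ) * Complex.I * (∑ i, (n i : ℂ) * z i)).re =
    -Real.pi * (∑ i, ∑ j, (n i : ℝ) * (τ i j).im * (n j : ℝ)) -
      2 * Real.pi * (∑ i, (n i : ℝ) * (z i).im) := by
  have h1 : (∑ i, ∑ j, (n i : ℂ) * τ i j * (n j : ℂ)).im
      = ∑ i, ∑ j, (n i : ℝ) * (τ i j).im * (n j : ℝ) := by
    rw [Complex.im_sum]
    refine Finset.sum_congr rfl fun i _ => ?_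
    rw [Complex.im_sum]
    refine Finset.sum_congr rfl fun j _ => ?_
    simp [Complex.mul_im, Complex.mul_re]
  have h2 : (∑ i, (n i : ℂ) * z i).im = ∑ i, (n i : ℝ) * (z i).im := by
    rw [Complex.im_sum]
    refine Finset.sum_congr rfl fun i _ => ?_
    simp [Complex.mul_im]
  simp only [Complex.add_re, Complex.mul_re, Complex.mul_im, Complex.I_re, Complex.I_im,
    Complex.ofReal_re, Complex.ofReal_im, Complex.re_ofNat, Complex.im_ofNat, h1, h2]
  ring

lemma norm_thTerm (τ : Matrix (Fin h) (Fin h) ℂ) (n : Fin h → ℤ) (z : Fin h → ℂ) :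
    ‖thTerm τ n z‖ = Real.exp (-Real.pi * (∑ i, ∑ j, (n i : ℝ) * (τ i j).im * (n j : ℝ)) -
      2 * Real.pi * (∑ i, (n i : ℝ) * (z i).im)) := by
  rw [thTerm, Complex.norm_exp, term_re]

/-- Gaussian-type summability on ℤ -/
lemma summable_gauss (c a : ℝ) (hc : 0 < c) :
    Summable (fun k : ℤ => Real.exp (-c * (k : ℝ) ^ 2 + a * |(k : ℝ)|)) := by
  have key : ∀ k : ℤ, Real.exp (-c * (k : ℝ) ^ 2 + a * |(k : ℝ)|) ≤
      Real.exp ((a + 1) ^ 2 / (4 * c)) * Real.exp (-1) ^ k.natAbs := by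
    intro k
    have habs : ((k.natAbs : ℝ)) = |(k : ℝ)| := by
      rw [Nat.cast_natAbs]; push_cast; rfl
    rw [← Real.exp_nat_mul, ← Real.exp_add]
    apply Real.exp_le_exp.2
    rw [habs]
    set t := |(k : ℝ)| with ht
    have hsq : t ^ 2 = (k : ℝ) ^ 2 := sq_abs _
    have h1 : -c * t ^ 2 + a * t + t ≤ (a + 1) ^ 2 / (4 * c) := by
      rw [le_div_iff₀ (by positivity)]
      nlinarith [sq_nonneg (2 * c * t - (a + 1))]
    nlinarith
  refine Summable.of_nonneg_of_le (fun k => (Real.exp_pos _).le) key ?_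
  apply Summable.mul_left
  apply Summable.of_nat_of_neg <;>
    simpa using summable_geometric_of_lt_one (Real.exp_pos (-1)).le
      (Real.exp_lt_one_iff.2 (by norm_num))

/-- cons equivalence -/
def consE (N : ℕ) : ℤ × (Fin N → ℤ) ≃ (Fin (N + 1) → ℤ) where
  toFun p := Fin.cons p.1 p.2
  invFun n := (n 0, fun i => n i.succ)
  left_inv p := by simp
  right_inv n := funext fun i => by
    refine Fin.cases ?_ ?_ i <;> simp

/-- summability of products over pi types -/
lemma summable_pi_prod {g : ℤ → ℝ} (hg0 : ∀ k, 0 ≤ g k) (hg : Summable g) :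
    ∀ N : ℕ, Summable (fun n : Fin N → ℤ => ∏ i, g (n i)) := by
  intro N
  induction N with
  | zero =>
      haveI : Finite (Fin 0 → ℤ) := inferInstance
      exact Summable.of_finite
  | succ N ih =>
      have key : Summable ((fun n : Fin (N+1) → ℤ => ∏ i, g (n i)) ∘ (consE N)) := by
        have heq : ((fun n : Fin (N+1) → ℤ => ∏ i, g (n i)) ∘ (consE N)) =
            fun p : ℤ × (Fin N → ℤ) => g p.1 * ∏ i, g (p.2 i) := by
          funext p
          obtain ⟨k, m⟩ := p
          simp [consE, Fin.prod_univ_succ]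
        rw [heq]
        have h1 : (0 : ℤ → ℝ) ≤ g := fun k => hg0 k
        have h2 : (0 : (Fin N → ℤ) → ℝ) ≤ fun m : Fin N → ℤ => ∏ i, g (m i) :=
          fun m => Finset.prod_nonneg fun i _ => hg0 _
        exact Summable.mul_of_nonneg (f := g)
          (g := fun m : Fin N → ℤ => ∏ i, g (m i)) hg ih h1 h2
      exact (Equiv.summable_iff _).1 key


/-- lower bound for positive definite quadratic forms -/
lemma quad_lb (hh : 1 ≤ h) (τ : Matrix (Fin h) (Fin h) ℂ)
    (hpos : (Matrix.of fun i j => (τ i j).im).PosDef) :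
    ∃ c > 0, ∀ n : Fin h → ℤ,
      c * (∑ i, (n i : ℝ) ^ 2) ≤ ∑ i, ∑ j, (n i : ℝ) * (τ i j).im * (n j : ℝ) := by
  set Q : (Fin h → ℝ) → ℝ := fun x => ∑ i, ∑ j, x i * (τ i j).im * x j with hQ
  have hQpos : ∀ x : Fin h → ℝ, x ≠ 0 → 0 < Q x := by
    intro x hx
    have h2 := hpos.dotProduct_mulVec_pos hx
    have : (star x) ⬝ᵥ ((Matrix.of fun i j => (τ i j).im) *ᵥ x) = Q x := by
      simp [dotProduct, Matrix.mulVec, Matrix.of_apply, Finset.mul_sum, mul_assoc, hQ]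
    rwa [this] at h2
  have hQc : Continuous Q := by
    apply continuous_finset_sum _ fun i _ => ?_
    apply continuous_finset_sum _ fun j _ => ?_
    exact ((continuous_apply i).mul continuous_const).mul (continuous_apply j)
  haveI : Nonempty (Fin h) := ⟨⟨0, hh⟩⟩
  haveI : Nontrivial (Fin h → ℝ) := ⟨⟨0, fun _ => 1, by
    intro hcon
    have := congrFun hcon ⟨0, hh⟩
    norm_num at this⟩⟩
  have hsn : (Metric.sphere (0 : Fin h → ℝ) 1).Nonempty :=
    NormedSpace.sphere_nonempty.2 zero_le_one
  obtain ⟨x₀, hx₀s, hmin⟩ :=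
    (isCompact_sphere (0 : Fin h → ℝ) 1).exists_isMinOn hsn hQc.continuousOn
  have hx₀ : ‖x₀‖ = 1 := by rwa [mem_sphere_zero_iff_norm] at hx₀s
  have hc : 0 < Q x₀ := by
    apply hQpos
    intro h0
    rw [h0] at hx₀
    simp at hx₀
  have hsmul : ∀ (a : ℝ) (u : Fin h → ℝ), Q (a • u) = a ^ 2 * Q u := by
    intro a u
    rw [hQ]
    simp only []
    rw [Finset.mul_sum]
    refine Finset.sum_congr rfl fun i _ => ?_
    rw [Finset.mul_sum]
    refine Finset.sum_congr rfl fun j _ => ?_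
    simp only [Pi.smul_apply, smul_eq_mul]
    ring
  have hlow : ∀ x : Fin h → ℝ, Q x₀ * ‖x‖ ^ 2 ≤ Q x := by
    intro x
    rcases eq_or_ne x 0 with rfl | hx
    · simp [hQ]
    · have hnx : ‖x‖ ≠ 0 := norm_ne_zero_iff.2 hx
      have hu : ‖‖x‖⁻¹ • x‖ = 1 := by
        rw [norm_smul, norm_inv, norm_norm, inv_mul_cancel₀ hnx]
      have hQu : Q x₀ ≤ Q (‖x‖⁻¹ • x) :=
        isMinOn_iff.1 hmin _ (by rw [mem_sphere_zero_iff_norm]; exact hu)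
      have hx2 : Q x = ‖x‖ ^ 2 * Q (‖x‖⁻¹ • x) := by
        rw [hsmul]; field_simp
      nlinarith [sq_nonneg ‖x‖]
  have hh0 : (0 : ℝ) < (h : ℝ) := by exact_mod_cast hh
  refine ⟨Q x₀ / h, div_pos hc hh0, fun n => ?_⟩
  set x : Fin h → ℝ := fun i => (n i : ℝ) with hx_def
  have hb : (∑ i, (n i : ℝ) ^ 2) ≤ (h : ℝ) * ‖x‖ ^ 2 := by
    calc (∑ i, (n i : ℝ) ^ 2) ≤ ∑ _i : Fin h, ‖x‖ ^ 2 := by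
          refine Finset.sum_le_sum fun i _ => ?_
          calc (n i : ℝ) ^ 2 = ‖x i‖ ^ 2 := by
                rw [Real.norm_eq_abs, _root_.sq_abs]
            _ ≤ ‖x‖ ^ 2 := by gcongr; exact norm_le_pi_norm x i
      _ = (h : ℝ) * ‖x‖ ^ 2 := by
          rw [Finset.sum_const, Finset.card_univ, Fintype.card_fin, nsmul_eq_mul]
  have step : Q x₀ / h * (∑ i, (n i : ℝ) ^ 2) ≤ Q x₀ * ‖x‖ ^ 2 := by
    calc Q x₀ / h * (∑ i, (n i : ℝ) ^ 2) ≤ Q x₀ / h * ((h : ℝ) * ‖x‖ ^ 2) := by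
          apply mul_le_mul_of_nonneg_left hb (le_of_lt (div_pos hc hh0))
      _ = Q x₀ * ‖x‖ ^ 2 := by field_simp
  exact step.trans (hlow x)


lemma norm_smul_clm (t : ℂ) (L : (Fin h → ℂ) →L[ℂ] ℂ) : ‖t • L‖ = ‖t‖ * ‖L‖ :=
  norm_smul t L

/-- the theta series is differentiable, with derivative the sum of term derivatives -/
lemma theta_hasFDerivAt (hh : 1 ≤ h) (τ : Matrix (Fin h) (Fin h) ℂ)
    (hpos : (Matrix.of fun i j => (τ i j).im).PosDef) (z : Fin h → ℂ) :
    HasFDerivAt (riemannTheta τ)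
      (∑' n : Fin h → ℤ,
        thTerm τ n z • linC (fun i => 2 * (Real.pi : ℂ) * Complex.I * (n i : ℂ))) z := by
  obtain ⟨c, hc, hquad⟩ := quad_lb hh τ hpos
  set R : ℝ := ‖z‖ + 1 with hR
  have hR0 : 0 ≤ R := by positivity
  set a : ℝ := 2 * Real.pi * R + 2 * Real.pi with ha
  set u : (Fin h → ℤ) → ℝ :=
    fun n => ∏ i, Real.exp (-(Real.pi * c) * (n i : ℝ) ^ 2 + a * |(n i : ℝ)|) with hu_def
  have hu : Summable u :=
    summable_pi_prod (fun k => (Real.exp_pos _).le)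
      (summable_gauss _ a (by positivity)) h
  have hu_eq : ∀ n : Fin h → ℤ,
      u n = Real.exp (-(Real.pi * c) * (∑ i, (n i : ℝ) ^ 2) + a * (∑ i, |(n i : ℝ)|)) := by
    intro n
    have h0 : u n = ∏ i, Real.exp (-(Real.pi * c) * (n i : ℝ) ^ 2 + a * |(n i : ℝ)|) := rfl
    rw [h0, ← Real.exp_sum]
    congr 1
    rw [Finset.sum_add_distrib, ← Finset.mul_sum, ← Finset.mul_sum]
  have hcore : ∀ (n : Fin h → ℤ) (x : Fin h → ℂ), ‖x‖ < R →
      ‖thTerm τ n x‖ ≤ Real.exp (-(Real.pi * c) * (∑ i, (n i : ℝ) ^ 2) +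
        (2 * Real.pi * R) * (∑ i, |(n i : ℝ)|)) := by
    intro n x hx
    rw [norm_thTerm]
    apply Real.exp_le_exp.2
    have hq : Real.pi * c * (∑ i, (n i : ℝ) ^ 2) ≤
        Real.pi * (∑ i, ∑ j, (n i : ℝ) * (τ i j).im * (n j : ℝ)) := by
      rw [mul_assoc]
      exact mul_le_mul_of_nonneg_left (hquad n) Real.pi_pos.le
    have habs : |∑ i, (n i : ℝ) * (x i).im| ≤ (∑ i, |(n i : ℝ)|) * R := by
      calc |∑ i, (n i : ℝ) * (x i).im| ≤ ∑ i, |(n i : ℝ) * (x i).im| :=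
            Finset.abs_sum_le_sum_abs _ _
        _ ≤ ∑ i, |(n i : ℝ)| * R := by
            refine Finset.sum_le_sum fun i _ => ?_
            rw [abs_mul]
            refine mul_le_mul_of_nonneg_left ?_ (abs_nonneg _)
            calc |(x i).im| ≤ ‖x i‖ := Complex.abs_im_le_norm _
              _ = ‖x i‖ := rfl
              _ ≤ ‖x‖ := norm_le_pi_norm x i
              _ ≤ R := hx.le
        _ = (∑ i, |(n i : ℝ)|) * R := by rw [Finset.sum_mul]
    have hlin : -(2 * Real.pi * (∑ i, (n i : ℝ) * (x i).im)) ≤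
        (2 * Real.pi * R) * (∑ i, |(n i : ℝ)|) := by
      have h1 : -(∑ i, (n i : ℝ) * (x i).im) ≤ |∑ i, (n i : ℝ) * (x i).im| :=
        neg_le_abs _
      nlinarith [Real.pi_pos]
    linarith
  have hbound : ∀ (n : Fin h → ℤ), ∀ x ∈ Metric.ball (0 : Fin h → ℂ) R,
      ‖thTerm τ n x • linC (fun i => 2 * (Real.pi : ℂ) * Complex.I * (n i : ℂ))‖ ≤ u n := by
    intro n x hx
    rw [mem_ball_zero_iff] at hx
    rw [norm_smul_clm]
    have h1 := hcore n x hx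
    have h3 : (∑ i, ‖(2 * (Real.pi : ℂ) * Complex.I * (n i : ℂ))‖) =
        2 * Real.pi * ∑ i, |(n i : ℝ)| := by
      rw [Finset.mul_sum]
      refine Finset.sum_congr rfl fun i _ => ?_
      simp only [norm_mul, Complex.norm_I, Complex.norm_real, Real.norm_eq_abs,
        Complex.norm_intCast, Complex.norm_ofNat]
      rw [abs_of_pos Real.pi_pos]
      push_cast
      ring
    have h2 : ‖linC (fun i => 2 * (Real.pi : ℂ) * Complex.I * (n i : ℂ))‖ ≤
        2 * Real.pi * ∑ i, |(n i : ℝ)| := h3 ▸ norm_linC_le _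
    have hS0 : 0 ≤ 2 * Real.pi * ∑ i, |(n i : ℝ)| := by positivity
    calc ‖thTerm τ n x‖ * ‖linC (fun i => 2 * (Real.pi : ℂ) * Complex.I * (n i : ℂ))‖
        ≤ Real.exp (-(Real.pi * c) * (∑ i, (n i : ℝ) ^ 2) +
            (2 * Real.pi * R) * (∑ i, |(n i : ℝ)|)) * (2 * Real.pi * ∑ i, |(n i : ℝ)|) :=
          mul_le_mul h1 h2 (norm_nonneg _) (Real.exp_pos _).le
      _ ≤ Real.exp (-(Real.pi * c) * (∑ i, (n i : ℝ) ^ 2) +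
            (2 * Real.pi * R) * (∑ i, |(n i : ℝ)|)) *
            Real.exp (2 * Real.pi * ∑ i, |(n i : ℝ)|) := by
          gcongr
          have := Real.add_one_le_exp (2 * Real.pi * ∑ i, |(n i : ℝ)|)
          linarith
      _ = Real.exp (-(Real.pi * c) * (∑ i, (n i : ℝ) ^ 2) +
            (2 * Real.pi * R) * (∑ i, |(n i : ℝ)|) + 2 * Real.pi * ∑ i, |(n i : ℝ)|) :=
          (Real.exp_add _ _).symm
      _ = u n := by
          rw [hu_eq n, ha]
          congr 1
          ring
  have hf0 : Summable fun n : Fin h → ℤ => thTerm τ n z := by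
    refine Summable.of_norm_bounded hu fun n => ?_
    refine (hcore n z (by rw [hR]; linarith)).trans ?_
    rw [hu_eq n]
    apply Real.exp_le_exp.2
    have hS : 0 ≤ ∑ i, |(n i : ℝ)| := Finset.sum_nonneg fun i _ => abs_nonneg _
    rw [ha]
    nlinarith [Real.pi_pos]
  have hzmem : z ∈ Metric.ball (0 : Fin h → ℂ) R := by
    rw [mem_ball_zero_iff, hR]; linarith
  have key := hasFDerivAt_tsum_of_isPreconnected hu (Metric.isOpen_ball)
    (convex_ball (0 : Fin h → ℂ) R).isPreconnected
    (fun n x _ => hasFDerivAt_thTerm τ n x) hbound hzmem hf0 hzmem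
  exact key


lemma theta_even (τ : Matrix (Fin h) (Fin h) ℂ) (z : Fin h → ℂ) :
    riemannTheta τ (-z) = riemannTheta τ z := by
  rw [riemannTheta_eq, riemannTheta_eq,
    ← (Equiv.neg (Fin h → ℤ)).tsum_eq (fun n => thTerm τ n (-z))]
  refine tsum_congr fun n => ?_
  simp only [Equiv.neg_apply]
  unfold thTerm
  congr 1
  have e1 : (∑ i, ∑ j, (((-n) i : ℤ) : ℂ) * τ i j * (((-n) j : ℤ) : ℂ)) =
      ∑ i, ∑ j, ((n i : ℤ) : ℂ) * τ i j * ((n j : ℤ) : ℂ) := by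
    refine Finset.sum_congr rfl fun i _ => Finset.sum_congr rfl fun j _ => ?_
    simp only [Pi.neg_apply, Int.cast_neg]
    ring
  have e2 : (∑ i, (((-n) i : ℤ) : ℂ) * (-z) i) = ∑ i, ((n i : ℤ) : ℂ) * z i := by
    refine Finset.sum_congr rfl fun i _ => ?_
    simp only [Pi.neg_apply, Int.cast_neg]
    ring
  rw [e1, e2]

lemma theta_qp (τ : Matrix (Fin h) (Fin h) ℂ) (hsymm : τ.IsSymm) (ε δ : Fin h → ℤ)
    (z : Fin h → ℂ) :
    riemannTheta τ (z + fun i => (∑ j, τ i j * (ε j : ℂ)) + (δ i : ℂ)) =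
      Complex.exp (-(Real.pi : ℂ) * Complex.I * (∑ i, ∑ j, (ε i : ℂ) * τ i j * (ε j : ℂ))
        - 2 * (Real.pi : ℂ) * Complex.I * (∑ i, (ε i : ℂ) * z i)) * riemannTheta τ z := by
  rw [riemannTheta_eq, riemannTheta_eq, ← tsum_mul_left,
    ← (Equiv.subRight ε).tsum_eq (fun n => thTerm τ n _)]
  refine tsum_congr fun n => ?_
  simp only [Equiv.subRight_apply]
  rw [thTerm, thTerm, ← Complex.exp_add]
  set S1 := ∑ i, ∑ j, (n i : ℂ) * τ i j * (n j : ℂ) with hS1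
  set E1 := ∑ i, ∑ j, (ε i : ℂ) * τ i j * (ε j : ℂ) with hE1
  set M := ∑ i, ∑ j, (n i : ℂ) * τ i j * (ε j : ℂ) with hM
  set Zn := ∑ i, (n i : ℂ) * z i with hZn
  set Zε := ∑ i, (ε i : ℂ) * z i with hZε
  have swap : (∑ i, ∑ j, (ε i : ℂ) * τ i j * (n j : ℂ)) = M := by
    rw [Finset.sum_comm, hM]
    refine Finset.sum_congr rfl fun i _ => Finset.sum_congr rfl fun j _ => ?_
    rw [hsymm.apply i j]
    ring
  have hk : ((∑ i, n i * δ i - ∑ i, ε i * δ i : ℤ) : ℂ) =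
      (∑ i, (n i : ℂ) * (δ i : ℂ)) - ∑ i, (ε i : ℂ) * (δ i : ℂ) := by
    push_cast
    rfl
  have e1 : (∑ i, ∑ j, (((n - ε) i : ℤ) : ℂ) * τ i j * (((n - ε) j : ℤ) : ℂ)) =
      S1 - (∑ i, ∑ j, (ε i : ℂ) * τ i j * (n j : ℂ)) - M + E1 := by
    have step : (∑ i, ∑ j, (((n - ε) i : ℤ) : ℂ) * τ i j * (((n - ε) j : ℤ) : ℂ)) =
        ∑ i, ∑ j, ((n i : ℂ) * τ i j * (n j : ℂ) - (ε i : ℂ) * τ i j * (n j : ℂ)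
          - (n i : ℂ) * τ i j * (ε j : ℂ) + (ε i : ℂ) * τ i j * (ε j : ℂ)) := by
      refine Finset.sum_congr rfl fun i _ => Finset.sum_congr rfl fun j _ => ?_
      simp only [Pi.sub_apply, Int.cast_sub]
      ring
    rw [step]
    simp only [Finset.sum_add_distrib, Finset.sum_sub_distrib]
    rfl
  have eS : (∑ i, (n i : ℂ) * (∑ j, τ i j * (ε j : ℂ))) = M := by
    rw [hM]
    refine Finset.sum_congr rfl fun i _ => ?_
    rw [Finset.mul_sum]
    exact Finset.sum_congr rfl fun j _ => by ring
  have eSε : (∑ i, (ε i : ℂ) * (∑ j, τ i j * (ε j : ℂ))) = E1 := by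
    rw [hE1]
    refine Finset.sum_congr rfl fun i _ => ?_
    rw [Finset.mul_sum]
    exact Finset.sum_congr rfl fun j _ => by ring
  have e2 : (∑ i, (((n - ε) i : ℤ) : ℂ) *
        ((z + fun i => (∑ j, τ i j * (ε j : ℂ)) + (δ i : ℂ)) i)) =
      Zn - Zε + (M - E1) + ((∑ i, (n i : ℂ) * (δ i : ℂ)) - ∑ i, (ε i : ℂ) * (δ i : ℂ)) := by
    have step : (∑ i, (((n - ε) i : ℤ) : ℂ) *
          ((z + fun i => (∑ j, τ i j * (ε j : ℂ)) + (δ i : ℂ)) i)) =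
        ∑ i, ((n i : ℂ) * z i - (ε i : ℂ) * z i
          + ((n i : ℂ) * (∑ j, τ i j * (ε j : ℂ)) - (ε i : ℂ) * (∑ j, τ i j * (ε j : ℂ)))
          + ((n i : ℂ) * (δ i : ℂ) - (ε i : ℂ) * (δ i : ℂ))) := by
      refine Finset.sum_congr rfl fun i _ => ?_
      simp only [Pi.sub_apply, Pi.add_apply, Int.cast_sub]
      ring
    rw [step]
    simp only [Finset.sum_add_distrib, Finset.sum_sub_distrib]
    rw [eS, eSε]
  have key : (Real.pi : ℂ) * Complex.I *
        (∑ i, ∑ j, (((n - ε) i : ℤ) : ℂ) * τ i j * (((n - ε) j : ℤ) : ℂ)) +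
        2 * (Real.pi : ℂ) * Complex.I * (∑ i, (((n - ε) i : ℤ) : ℂ) *
          ((z + fun i => (∑ j, τ i j * (ε j : ℂ)) + (δ i : ℂ)) i)) =
      (-(Real.pi : ℂ) * Complex.I * E1 - 2 * (Real.pi : ℂ) * Complex.I * Zε
        + ((Real.pi : ℂ) * Complex.I * S1 + 2 * (Real.pi : ℂ) * Complex.I * Zn))
        + ((∑ i, n i * δ i - ∑ i, ε i * δ i : ℤ) : ℂ) * (2 * (Real.pi : ℂ) * Complex.I) := by
    rw [e1, e2, swap, hk]
    ring
  rw [key, Complex.exp_add, Complex.exp_int_mul_two_pi_mul_I, mul_one, Complex.exp_add]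


end RTAux

open RTAux in
/-- For an odd two-torsion point `m = (τε+δ)/2` and `x₀ = exp(−πi εᵀb)`, the total derivative
of the semi-abelic theta function `T(z,x) = θ(τ,z) + x θ(τ,z+b)` at `(−m−b/2, x₀)` vanishes
iff `θ(τ, −m+b/2) = 0` and the derivative of `z ↦ θ(τ,z)` at `−m+b/2` vanishes, i.e. iff
`−m+b/2` is a singular point of the theta divisor of `τ`. -/
theorem statement11 (h : ℕ) (hh : 1 ≤ h) (τ : Matrix (Fin h) (Fin h) ℂ)
    (hsymm : τ.IsSymm)
    (hpos : (Matrix.of fun i j => (τ i j).im).PosDef)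
    (b : Fin h → ℂ) (ε δ : Fin h → ℤ) (hodd : Odd (∑ i, ε i * δ i)) :
    (fderiv ℂ
        (fun p : (Fin h → ℂ) × ℂ =>
          riemannTheta τ p.1 + p.2 * riemannTheta τ (p.1 + b))
        (fun i => -torsionPt τ ε δ i - b i / 2,
          Complex.exp (-(Real.pi : ℂ) * Complex.I * (∑ i, (ε i : ℂ) * b i))) = 0) ↔
      (riemannTheta τ (fun i => -torsionPt τ ε δ i + b i / 2) = 0 ∧
        fderiv ℂ (fun z => riemannTheta τ z)
          (fun i => -torsionPt τ ε δ i + b i / 2) = 0) := by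
  classical
  have hdiff : ∀ z : Fin h → ℂ,
      HasFDerivAt (riemannTheta τ) (fderiv ℂ (riemannTheta τ) z) z := fun z =>
    ((theta_hasFDerivAt hh τ hpos z).differentiableAt).hasFDerivAt
  set z₀ : Fin h → ℂ := fun i => -torsionPt τ ε δ i - b i / 2 with hz₀
  set x₀ : ℂ := Complex.exp (-(Real.pi : ℂ) * Complex.I * (∑ i, (ε i : ℂ) * b i)) with hx₀
  set w : Fin h → ℂ := fun i => -torsionPt τ ε δ i + b i / 2 with hw
  set y : Fin h → ℂ := fun i => torsionPt τ ε δ i + b i / 2 with hy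
  set p : Fin h → ℂ := fun i => (∑ j, τ i j * (ε j : ℂ)) + (δ i : ℂ) with hp
  have hmp : ∀ i, torsionPt τ ε δ i = p i / 2 := fun i => by
    rw [torsionPt, hp]
  have hwz : z₀ + b = w := funext fun i => by
    simp only [hz₀, hw, Pi.add_apply]; ring
  have h_negz0 : -z₀ = y := funext fun i => by
    simp only [hz₀, hy, Pi.neg_apply]; ring
  have hwp : w + p = y := funext fun i => by
    simp only [hw, hy, Pi.add_apply, hmp i]; ring
  set A := fderiv ℂ (riemannTheta τ) z₀ with hA_def
  set B := fderiv ℂ (riemannTheta τ) w with hB_def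
  set Dy := fderiv ℂ (riemannTheta τ) y with hDy_def
  -- evenness : A v = - Dy v
  have hevenfun : (riemannTheta τ ∘ (Neg.neg : (Fin h → ℂ) → (Fin h → ℂ))) = riemannTheta τ :=
    funext fun z => theta_even τ z
  have hA : A = Dy.comp (-(ContinuousLinearMap.id ℂ (Fin h → ℂ))) := by
    have hneg : HasFDerivAt (fun z : Fin h → ℂ => -z)
        (-(ContinuousLinearMap.id ℂ (Fin h → ℂ))) z₀ :=
      (ContinuousLinearMap.id ℂ (Fin h → ℂ)).hasFDerivAt.neg
    have h1 := (hdiff (-z₀)).comp z₀ hneg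
    rw [h_negz0] at h1
    rw [hevenfun] at h1
    exact (hdiff z₀).unique h1
  have hAv : ∀ v, A v = -(Dy v) := fun v => by
    rw [hA]
    simp
  -- quasiperiodicity derivative
  set E1 : ℂ := ∑ i, ∑ j, (ε i : ℂ) * τ i j * (ε j : ℂ) with hE1
  set c0 : ℂ := -(Real.pi : ℂ) * Complex.I * E1 with hc0
  set aε : Fin h → ℂ := fun i => -(2 * (Real.pi : ℂ) * Complex.I * (ε i : ℂ)) with haε
  have hqpfun : (fun z : Fin h → ℂ => riemannTheta τ (z + p)) =
      (fun z : Fin h → ℂ => Complex.exp (c0 + linC aε z) * riemannTheta τ z) := by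
    funext z
    rw [hp]
    rw [theta_qp τ hsymm ε δ z]
    congr 2
    rw [linC_apply, hc0, hE1]
    rw [sub_eq_add_neg]
    congr 1
    rw [Finset.mul_sum, ← Finset.sum_neg_distrib]
    exact Finset.sum_congr rfl fun i _ => by rw [haε]; ring
  set gw : ℂ := Complex.exp (c0 + linC aε w) with hgw_def
  have hDy : Dy = gw • B + riemannTheta τ w • (gw • linC aε) := by
    have hl : HasFDerivAt (fun z : Fin h → ℂ => riemannTheta τ (z + p))
        (Dy.comp (ContinuousLinearMap.id ℂ (Fin h → ℂ))) w := by
      have h2 := (hdiff (w + p)).comp w ((hasFDerivAt_id w).add_const p)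
      rw [hwp] at h2
      exact h2
    have hG : HasFDerivAt (fun z : Fin h → ℂ => Complex.exp (c0 + linC aε z))
        (gw • linC aε) w := by
      rw [hgw_def]
      exact hasFDerivAt_cexp_linC c0 aε w
    have hprod := hG.mul (hdiff w)
    change HasFDerivAt (fun z : Fin h → ℂ => Complex.exp (c0 + linC aε z) * riemannTheta τ z) _ w at hprod
    rw [← hqpfun] at hprod
    have := hl.unique hprod
    rw [ContinuousLinearMap.comp_id] at this
    rw [this]
  -- the scalar gw = -x₀
  obtain ⟨l, hl⟩ := hodd
  have hK : ((∑ i, ε i * δ i : ℤ) : ℂ) = ∑ i, (ε i : ℂ) * (δ i : ℂ) := by push_cast; rfl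
  have eSε : (∑ i, (ε i : ℂ) * (∑ j, τ i j * (ε j : ℂ))) = E1 := by
    rw [hE1]
    refine Finset.sum_congr rfl fun i _ => ?_
    rw [Finset.mul_sum]
    exact Finset.sum_congr rfl fun j _ => by ring
  have hEm : ∑ i, (ε i : ℂ) * torsionPt τ ε δ i
      = (E1 + ((∑ i, ε i * δ i : ℤ) : ℂ)) / 2 := by
    rw [hK]
    have step : ∑ i, (ε i : ℂ) * torsionPt τ ε δ i =
        ∑ i, (((ε i : ℂ) * (∑ j, τ i j * (ε j : ℂ))) / 2 + ((ε i : ℂ) * (δ i : ℂ)) / 2) := by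
      refine Finset.sum_congr rfl fun i _ => ?_
      rw [torsionPt]
      ring
    rw [step, Finset.sum_add_distrib, ← Finset.sum_div, ← Finset.sum_div, eSε]
    ring
  have hlinw : linC aε w = 2 * (Real.pi : ℂ) * Complex.I * (∑ i, (ε i : ℂ) * torsionPt τ ε δ i)
      - (Real.pi : ℂ) * Complex.I * (∑ i, (ε i : ℂ) * b i) := by
    rw [linC_apply, Finset.mul_sum, Finset.mul_sum, ← Finset.sum_sub_distrib]
    refine Finset.sum_congr rfl fun i _ => ?_
    rw [haε, hw]
    ring
  have hexp : c0 + linC aε w = (l : ℂ) * (2 * (Real.pi : ℂ) * Complex.I) +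
      (Real.pi : ℂ) * Complex.I + (-(Real.pi : ℂ) * Complex.I * (∑ i, (ε i : ℂ) * b i)) := by
    rw [hlinw, hEm, hc0, hl]
    push_cast
    ring
  have hgw : gw = -x₀ := by
    rw [hgw_def, hexp, Complex.exp_add, Complex.exp_add,
      Complex.exp_int_mul_two_pi_mul_I, Complex.exp_pi_mul_I, hx₀]
    ring
  have hx₀ne : x₀ ≠ 0 := Complex.exp_ne_zero _
  -- derivative of the full function
  have hT : HasFDerivAt
      (fun pq : (Fin h → ℂ) × ℂ => riemannTheta τ pq.1 + pq.2 * riemannTheta τ (pq.1 + b))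
      (A.comp (ContinuousLinearMap.fst ℂ (Fin h → ℂ) ℂ) +
        (x₀ • (B.comp (ContinuousLinearMap.fst ℂ (Fin h → ℂ) ℂ)) +
          riemannTheta τ w • ContinuousLinearMap.snd ℂ (Fin h → ℂ) ℂ)) (z₀, x₀) := by
    have hT1 : HasFDerivAt (fun pq : (Fin h → ℂ) × ℂ => riemannTheta τ pq.1)
        (A.comp (ContinuousLinearMap.fst ℂ (Fin h → ℂ) ℂ)) (z₀, x₀) :=
      by have := (hdiff z₀).comp (z₀, x₀) (hasFDerivAt_fst (𝕜 := ℂ) (p := (z₀, x₀))); exact this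
    have hT2in : HasFDerivAt (fun pq : (Fin h → ℂ) × ℂ => pq.1 + b)
        (ContinuousLinearMap.fst ℂ (Fin h → ℂ) ℂ) (z₀, x₀) :=
      hasFDerivAt_fst.add_const b
    have hT2 : HasFDerivAt (fun pq : (Fin h → ℂ) × ℂ => riemannTheta τ (pq.1 + b))
        (B.comp (ContinuousLinearMap.fst ℂ (Fin h → ℂ) ℂ)) (z₀, x₀) := by
      have h2 := (hdiff (z₀ + b)).comp (z₀, x₀) hT2in
      rw [hwz] at h2
      exact h2
    have hTmul := hasFDerivAt_snd.mul hT2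
    rw [hwz] at hTmul
    exact hT1.add hTmul
  rw [hT.fderiv]
  constructor
  · intro hL
    have hθw : riemannTheta τ w = 0 := by
      have h01 := congrArg (fun L : ((Fin h → ℂ) × ℂ) →L[ℂ] ℂ =>
        L ((0 : Fin h → ℂ), (1 : ℂ))) hL
      simpa using h01
    refine ⟨hθw, ?_⟩
    have hB0 : ∀ v, B v = 0 := by
      intro v
      have hv := congrArg (fun L : ((Fin h → ℂ) × ℂ) →L[ℂ] ℂ => L (v, (0 : ℂ))) hL
      simp only [ContinuousLinearMap.add_apply, ContinuousLinearMap.comp_apply,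
        ContinuousLinearMap.coe_fst', ContinuousLinearMap.coe_snd',
        ContinuousLinearMap.smul_apply, smul_eq_mul, ContinuousLinearMap.zero_apply,
        mul_zero, add_zero] at hv
      -- hv : A v + x₀ * B v + θ w * 0 = 0 (roughly)
      have hAv2 : A v = x₀ * B v := by
        rw [hAv v, hDy]
        simp only [ContinuousLinearMap.add_apply, ContinuousLinearMap.smul_apply,
          smul_eq_mul, hθw, zero_mul, mul_zero, add_zero, hgw]
        ring
      rw [hAv2] at hv
      have : (2 : ℂ) * (x₀ * B v) = 0 := by linear_combination hv
      have h2 : x₀ * B v = 0 := (mul_eq_zero.1 this).resolve_left two_ne_zero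
      rcases mul_eq_zero.1 h2 with hc | hc
      · exact absurd hc hx₀ne
      · exact hc
    exact ContinuousLinearMap.ext hB0
  · rintro ⟨hθw, hB0⟩
    have hB0' : B = 0 := hB0
    have hA0 : A = 0 := by
      ext v
      rw [hAv v, hDy, hB0', hθw]
      simp
    rw [hA0, hB0', hθw]
    simp
    ext <;> simp
end

section
/- Let h ≥ 1, n ≥ 1, τ ∈ H_h, b₁,…,b_n ∈ ℂ^h, and let t_{jk} (1 ≤ j < k ≤ n) be nonzero complex numbers, with t_{kj} := t_{jk}. Define the standard semi-abelic theta function T(z,x) := Σ_{μ ∈ {0,1}^n} (∏_{j=1}^n x_j^{μ_j}) (∏_{1≤j<k≤n} t_{jk}^{μ_j μ_k}) θ(τ, z + Σ_j μ_j b_j). Fix j ∈ {1,…,n}, z ∈ ℂ^h and x ∈ ℂ^n, and for y ∈ ℂ let x'(y) ∈ ℂ^n be the vector with j-th entry y and k-th entry t_{jk}^{-1} x_k for k ≠ j; let x'' ∈ ℂ^n be the vector with j-th entry 0 and k-th entry x_k for k ≠ j. Then for all y ∈ ℂ, T(z − b_j, x'(y)) − T(z − b_j, x'(0)) = y · T(z,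 x''). (This is the compatibility of the semi-abelic theta function with the gluing identifying the x_j = 0 and x_j = ∞ faces of the standard degeneration with a shift by b_j.) -/
open Complex Matrix Finset Filter

/-- The standard semi-abelic theta function of a torus rank `n` degeneration:
`T(z,x) = Σ_{μ ∈ {0,1}^n} (∏_j x_j^{μ_j}) (∏_{j<k} t_{jk}^{μ_j μ_k}) θ(τ, z + Σ_j μ_j b_j)`. -/
noncomputable def Tstd {h n : ℕ} (τ : Matrix (Fin h) (Fin h) ℂ) (b : Fin n → Fin h → ℂ)
    (t : Fin n → Fin n → ℂ) (z : Fin h → ℂ) (x : Fin n → ℂ) : ℂ :=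
  ∑ μ : Fin n → Bool,
    (∏ j, if μ j = true then x j else 1) *
      (∏ j, ∏ k, if j < k ∧ μ j = true ∧ μ k = true then t j k else 1) *
      riemannTheta τ (fun i => z i + ∑ j, if μ j = true then b j i else 0)

lemma core_prod {n : ℕ} (t : Fin n → Fin n → ℂ)
    (ht0 : ∀ j k, t j k ≠ 0) (htsymm : ∀ j k, t k j = t j k)
    (x : Fin n → ℂ) (j : Fin n) (ν : Fin n → Bool) (hν : ν j = false) :
    (∏ k ∈ Finset.univ.erase j, if ν k = true then (t j k)⁻¹ * x k else 1) *
      (∏ k, ∏ l, if k < l ∧ Function.update ν j true k = true ∧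
          Function.update ν j true l = true then t k l else 1) =
    (∏ k, if ν k = true then Function.update x j 0 k else 1) *
      (∏ k, ∏ l, if k < l ∧ ν k = true ∧ ν l = true then t k l else 1) := by
  classical
  set μ := Function.update ν j true with hμdef
  have hμj : μ j = true := by simp [hμdef]
  have hμk : ∀ k, k ≠ j → μ k = ν k := fun k hk => Function.update_of_ne hk _ _
  set A : ℂ := ∏ k ∈ Finset.univ.erase j, if ν k = true then (t j k)⁻¹ * x k else 1 with hA
  set B : ℂ := ∏ k ∈ Finset.univ.erase j, if ν k = true then t j k else 1 with hB
  set X : ℂ := ∏ k ∈ Finset.univ.erase j, if ν k = true then x k else 1 with hX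
  set Tν : ℂ := ∏ k, ∏ l, if k < l ∧ ν k = true ∧ ν l = true then t k l else 1 with hTν
  have claim1 : A * B = X := by
    rw [hA, hB, hX, ← Finset.prod_mul_distrib]
    refine Finset.prod_congr rfl fun k hk => ?_
    by_cases hk2 : ν k = true
    · simp only [hk2, if_true]
      rw [mul_comm ((t j k)⁻¹) (x k), mul_assoc, inv_mul_cancel₀ (ht0 j k), mul_one]
    · simp [hk2]
  have claim2 : (∏ k, if ν k = true then Function.update x j 0 k else 1) = X := by
    rw [← Finset.prod_erase Finset.univ
      (f := fun k => if ν k = true then Function.update x j 0 k else 1) (a := j) (by simp [hν])]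
    refine Finset.prod_congr rfl fun k hk => ?_
    have hk' : k ≠ j := (Finset.mem_erase.1 hk).1
    simp [Function.update_of_ne hk']
  -- the t-product identity
  have claim3 : (∏ k, ∏ l, if k < l ∧ μ k = true ∧ μ l = true then t k l else 1)
      = B * Tν := by
    -- row j
    have hrowj : (∏ l, if j < l ∧ μ j = true ∧ μ l = true then t j l else 1)
        = ∏ l ∈ Finset.univ.erase j, if j < l ∧ ν l = true then t j l else 1 := by
      rw [← Finset.prod_erase Finset.univ
        (f := fun l => if j < l ∧ μ j = true ∧ μ l = true then t j l else 1)
        (a := j) (by simp : (if j < j ∧ μ j = true ∧ μ j = true then t j j else 1) = 1)]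
      refine Finset.prod_congr rfl fun l hl => ?_
      have hl' : l ≠ j := (Finset.mem_erase.1 hl).1
      rw [hμk l hl', hμj]
      simp
    -- for k ≠ j, row k splits off the l = j entry
    have hrowk : ∀ k, k ≠ j →
        (∏ l, if k < l ∧ μ k = true ∧ μ l = true then t k l else 1)
        = (if k < j ∧ ν k = true then t j k else 1) *
            ∏ l ∈ Finset.univ.erase j, if k < l ∧ ν k = true ∧ ν l = true then t k l else 1 := by
      intro k hk
      rw [← Finset.mul_prod_erase Finset.univ
        (f := fun l => if k < l ∧ μ k = true ∧ μ l = true then t k l else 1) (Finset.mem_univ j)]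
      congr 1
      · rw [hμj, hμk k hk, htsymm]
        simp
      · refine Finset.prod_congr rfl fun l hl => ?_
        have hl' : l ≠ j := (Finset.mem_erase.1 hl).1
        rw [hμk l hl', hμk k hk]
    have hTν' : Tν = ∏ k ∈ Finset.univ.erase j, ∏ l ∈ Finset.univ.erase j,
        if k < l ∧ ν k = true ∧ ν l = true then t k l else 1 := by
      rw [hTν, ← Finset.prod_erase Finset.univ
        (f := fun k => ∏ l, if k < l ∧ ν k = true ∧ ν l = true then t k l else 1)
        (a := j) (by simp [hν])]
      refine Finset.prod_congr rfl fun k hk => ?_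
      rw [← Finset.prod_erase Finset.univ
        (f := fun l => if k < l ∧ ν k = true ∧ ν l = true then t k l else 1)
        (a := j) (by simp [hν])]
    have hBsplit : B = (∏ k ∈ Finset.univ.erase j, if j < k ∧ ν k = true then t j k else 1) *
        ∏ k ∈ Finset.univ.erase j, if k < j ∧ ν k = true then t j k else 1 := by
      rw [hB, ← Finset.prod_mul_distrib]
      refine Finset.prod_congr rfl fun k hk => ?_
      have hk' : k ≠ j := (Finset.mem_erase.1 hk).1
      rcases lt_or_gt_of_ne (Fin.val_ne_of_ne hk') with hlt | hgt
      · have h1 : k < j := hlt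
        have h2 : ¬ j < k := by omega
        by_cases hk2 : ν k = true <;> simp [h1, h2, hk2]
      · have h1 : j < k := hgt
        have h2 : ¬ k < j := by omega
        by_cases hk2 : ν k = true <;> simp [h1, h2, hk2]
    rw [← Finset.mul_prod_erase Finset.univ
      (f := fun k => ∏ l, if k < l ∧ μ k = true ∧ μ l = true then t k l else 1)
      (Finset.mem_univ j), hrowj]
    rw [Finset.prod_congr rfl (fun k hk => hrowk k (Finset.mem_erase.1 hk).1),
      Finset.prod_mul_distrib, hBsplit, hTν']
    ring
  -- put it together
  rw [claim2, claim3]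
  rw [show A * (B * Tν) = (A * B) * Tν by ring, claim1]

/-- Compatibility of the standard semi-abelic theta function with the gluing identifying the
`x_j = 0` and `x_j = ∞` faces with a shift by `b_j`:
`T(z − b_j, x'(y)) − T(z − b_j, x'(0)) = y · T(z, x'')` where `x'(y)` has `j`-th entry `y`
and `k`-th entry `t_{jk}⁻¹ x_k` for `k ≠ j`, and `x''` is `x` with `j`-th entry `0`. -/
theorem statement13 (h n : ℕ) (hh : 1 ≤ h) (hn : 1 ≤ n)
    (τ : Matrix (Fin h) (Fin h) ℂ) (hsymm : τ.IsSymm)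
    (hpos : (Matrix.of fun i j => (τ i j).im).PosDef)
    (b : Fin n → Fin h → ℂ) (t : Fin n → Fin n → ℂ)
    (ht0 : ∀ j k, t j k ≠ 0) (htsymm : ∀ j k, t k j = t j k)
    (j : Fin n) (z : Fin h → ℂ) (x : Fin n → ℂ) :
    ∀ y : ℂ,
      Tstd τ b t (fun i => z i - b j i)
          (Function.update (fun k => (t j k)⁻¹ * x k) j y) -
        Tstd τ b t (fun i => z i - b j i)
          (Function.update (fun k => (t j k)⁻¹ * x k) j 0) =
      y * Tstd τ b t z (Function.update x j 0) := by
  intro y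
  classical
  have hflip : Function.Involutive (fun ν : Fin n → Bool => Function.update ν j (!ν j)) := by
    intro ν; funext k
    by_cases hk : k = j
    · subst hk; simp
    · simp [Function.update_of_ne hk]
  unfold Tstd
  rw [← Finset.sum_sub_distrib, Finset.mul_sum]
  refine Fintype.sum_equiv hflip.toPerm _ _ fun ν => ?_
  simp only [Function.Involutive.coe_toPerm]
  by_cases hνj : ν j = true
  -- main case : ν j = true
  · set ν' := Function.update ν j false with hν'def
    have hν'j : ν' j = false := by simp [hν'def]
    have hflipν : Function.update ν j (!ν j) = ν' := by simp [hνj, hν'def]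
    have hback : Function.update ν' j true = ν := by
      funext k
      by_cases hk : k = j
      · subst hk; simp [hνj]
      · simp [hν'def, Function.update_of_ne hk]
    have hν'k : ∀ k, k ≠ j → ν' k = ν k := fun k hk => Function.update_of_ne hk _ _
    simp only [hflipν]
    have hzero : (∏ k, if ν k = true
        then Function.update (fun k => (t j k)⁻¹ * x k) j 0 k else 1) = 0 :=
      Finset.prod_eq_zero (Finset.mem_univ j) (by simp [hνj])
    rw [hzero]
    have hyprod : (∏ k, if ν k = true
        then Function.update (fun k => (t j k)⁻¹ * x k) j y k else 1)
        = y * ∏ k ∈ Finset.univ.erase j, if ν' k = true then (t j k)⁻¹ * x k else 1 := by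
      rw [← Finset.mul_prod_erase Finset.univ
        (f := fun k => if ν k = true
          then Function.update (fun k => (t j k)⁻¹ * x k) j y k else 1) (Finset.mem_univ j)]
      congr 1
      · simp [hνj]
      · refine Finset.prod_congr rfl fun k hk => ?_
        have hk' : k ≠ j := (Finset.mem_erase.1 hk).1
        rw [hν'k k hk', Function.update_of_ne hk' _ _]
    have htheta : (fun i => (z i - b j i) + ∑ k, if ν k = true then b k i else 0)
        = fun i => z i + ∑ k, if ν' k = true then b k i else 0 := by
      funext i
      have h1 : (∑ k, if ν k = true then b k i else 0)
          = b j i + ∑ k ∈ Finset.univ.erase j, if ν' k = true then b k i else 0 := by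
        rw [← Finset.add_sum_erase Finset.univ
          (f := fun k => if ν k = true then b k i else 0) (Finset.mem_univ j)]
        congr 1
        · simp [hνj]
        · exact Finset.sum_congr rfl fun k hk =>
            by rw [hν'k k (Finset.mem_erase.1 hk).1]
      have h2 : (∑ k, if ν' k = true then b k i else 0)
          = ∑ k ∈ Finset.univ.erase j, if ν' k = true then b k i else 0 :=
        (Finset.sum_erase _ (by simp [hν'j])).symm
      rw [h1, h2]; ring
    rw [hyprod, htheta]
    have hcore := core_prod t ht0 htsymm x j ν' hν'j
    rw [hback] at hcore
    calc y * (∏ k ∈ Finset.univ.erase j, if ν' k = true then (t j k)⁻¹ * x k else 1) *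
          (∏ k, ∏ l, if k < l ∧ ν k = true ∧ ν l = true then t k l else 1) *
          riemannTheta τ (fun i => z i + ∑ k, if ν' k = true then b k i else 0) - 0 *
          ((∏ k, ∏ l, if k < l ∧ ν k = true ∧ ν l = true then t k l else 1)) *
          riemannTheta τ (fun i => z i + ∑ k, if ν' k = true then b k i else 0)
        = y * (((∏ k ∈ Finset.univ.erase j, if ν' k = true then (t j k)⁻¹ * x k else 1) *
            (∏ k, ∏ l, if k < l ∧ ν k = true ∧ ν l = true then t k l else 1)) *
          riemannTheta τ (fun i => z i + ∑ k, if ν' k = true then b k i else 0)) := by ring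
      _ = _ := by rw [hcore]
  -- degenerate case : ν j = false, both sides vanish
  · have hνj' : ν j = false := by simpa using hνj
    have heq : (∏ k, if ν k = true
        then Function.update (fun k => (t j k)⁻¹ * x k) j 0 k else 1)
        = ∏ k, if ν k = true
            then Function.update (fun k => (t j k)⁻¹ * x k) j y k else 1 := by
      refine Finset.prod_congr rfl fun k _ => ?_
      by_cases hk : k = j
      · subst hk; simp [hνj']
      · rw [Function.update_of_ne hk _ _, Function.update_of_ne hk _ _]
    have hR : (∏ k, if Function.update ν j (!ν j) k = true
        then Function.update x j 0 k else 1) = 0 :=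
      Finset.prod_eq_zero (Finset.mem_univ j) (by simp [hνj'])
    rw [heq]
    erw [hR]
    ring
end

section
/- Let h ≥ 1, τ ∈ H_h and b₁, b₂ ∈ ℂ^h, and define T_u(z,(u₀,u₁,u₂)) := u₀θ(τ,z) + u₁θ(τ,z+b₁) + u₂θ(τ,z+b₂). Let ε, δ ∈ ℤ^h, set m := (τε + δ)/2, and let σ ∈ {1,−1}. Then T_u( m − (b₁+b₂)/2, (0, σ·exp(πi·εᵀ(b₁−b₂)), 1) ) = (1 + σ·(−1)^{εᵀδ}) · θ(τ, m + (b₂−b₁)/2). In particular this value vanishes when σ = −(−1)^{εᵀδ}, so those fixed points of the involution lie on the semi-abelic theta divisor. -/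
open Complex Matrix Finset Filter

/-- Theta divisor on the `u`-component of the non-standard torus rank 2 semi-abelic variety:
`T_u(z,(u₀,u₁,u₂)) = u₀θ(z) + u₁θ(z+b₁) + u₂θ(z+b₂)`. -/
noncomputable def Tu2 {h : ℕ} (τ : Matrix (Fin h) (Fin h) ℂ) (b₁ b₂ : Fin h → ℂ)
    (z : Fin h → ℂ) (u₀ u₁ u₂ : ℂ) : ℂ :=
  u₀ * riemannTheta τ z + u₁ * riemannTheta τ (z + b₁) + u₂ * riemannTheta τ (z + b₂)

/-- The reindexing involution `n ↦ -n - ε` on `ℤ^g`. -/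
def negSubEquiv {g : ℕ} (ε : Fin g → ℤ) : (Fin g → ℤ) ≃ (Fin g → ℤ) where
  toFun n := fun i => -n i - ε i
  invFun n := fun i => -n i - ε i
  left_inv n := by funext i; ring
  right_inv n := by funext i; ring

lemma sum_torsionPt {g : ℕ} (τ : Matrix (Fin g) (Fin g) ℂ) (ε δ v : Fin g → ℤ) :
    ∑ i, (v i : ℂ) * torsionPt τ ε δ i =
      ((∑ i, ∑ j, (v i : ℂ) * τ i j * (ε j : ℂ)) + ∑ i, (v i : ℂ) * (δ i : ℂ)) / 2 := by
  rw [← Finset.sum_add_distrib, Finset.sum_div]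
  refine Finset.sum_congr rfl fun i _ => ?_
  rw [torsionPt, ← mul_div_assoc, mul_add, Finset.mul_sum]
  congr 2
  exact Finset.sum_congr rfl fun j _ => by ring

lemma quad_reflect {g : ℕ} (τ : Matrix (Fin g) (Fin g) ℂ) (hsymm : τ.IsSymm)
    (ε n : Fin g → ℤ) :
    ∑ i, ∑ j, (-(n i : ℂ) - ε i) * τ i j * (-(n j : ℂ) - ε j) =
      (∑ i, ∑ j, (n i : ℂ) * τ i j * (n j : ℂ)) +
        2 * (∑ i, ∑ j, (n i : ℂ) * τ i j * (ε j : ℂ)) +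
        (∑ i, ∑ j, (ε i : ℂ) * τ i j * (ε j : ℂ)) := by
  have hBB : ∑ i, ∑ j, (ε i : ℂ) * τ i j * (n j : ℂ)
      = ∑ i, ∑ j, (n i : ℂ) * τ i j * (ε j : ℂ) := by
    rw [Finset.sum_comm]
    refine Finset.sum_congr rfl fun j _ => Finset.sum_congr rfl fun i _ => ?_
    rw [hsymm.apply j i]; ring
  calc ∑ i, ∑ j, (-(n i : ℂ) - ε i) * τ i j * (-(n j : ℂ) - ε j)
      = ∑ i, ∑ j, ((n i : ℂ) * τ i j * (n j : ℂ) + (n i : ℂ) * τ i j * (ε j : ℂ)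
          + (ε i : ℂ) * τ i j * (n j : ℂ) + (ε i : ℂ) * τ i j * (ε j : ℂ)) := by
        refine Finset.sum_congr rfl fun i _ => Finset.sum_congr rfl fun j _ => by ring
    _ = _ := by
        simp only [Finset.sum_add_distrib]
        rw [hBB]; ring

lemma expo_eq {g : ℕ} (τ : Matrix (Fin g) (Fin g) ℂ) (hsymm : τ.IsSymm)
    (ε δ n : Fin g → ℤ) (w : Fin g → ℂ) :
    (Real.pi : ℂ) * Complex.I *
        (∑ i, ∑ j, (-(n i : ℂ) - ε i) * τ i j * (-(n j : ℂ) - ε j)) +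
      2 * (Real.pi : ℂ) * Complex.I *
        (∑ i, (-(n i : ℂ) - ε i) * (torsionPt τ ε δ i + w i)) =
    ((Real.pi : ℂ) * Complex.I * (∑ i, ∑ j, (n i : ℂ) * τ i j * (n j : ℂ)) +
        2 * (Real.pi : ℂ) * Complex.I * (∑ i, (n i : ℂ) * (torsionPt τ ε δ i - w i))) +
      ((-(∑ i, n i * δ i) : ℤ) : ℂ) * (2 * (Real.pi : ℂ) * Complex.I) +
      (-((Real.pi : ℂ) * Complex.I * (∑ i, (ε i : ℂ) * (δ i : ℂ))) -
        2 * (Real.pi : ℂ) * Complex.I * (∑ i, (ε i : ℂ) * w i)) := by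
  have hL1 : ∑ i, (-(n i : ℂ) - ε i) * (torsionPt τ ε δ i + w i)
      = -(∑ i, (n i : ℂ) * torsionPt τ ε δ i) - (∑ i, (n i : ℂ) * w i)
        - (∑ i, (ε i : ℂ) * torsionPt τ ε δ i) - (∑ i, (ε i : ℂ) * w i) := by
    simp only [sub_eq_add_neg, ← Finset.sum_neg_distrib, ← Finset.sum_add_distrib]
    exact Finset.sum_congr rfl fun i _ => by ring
  have hL2 : ∑ i, (n i : ℂ) * (torsionPt τ ε δ i - w i)
      = (∑ i, (n i : ℂ) * torsionPt τ ε δ i) - (∑ i, (n i : ℂ) * w i) := by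
    simp only [sub_eq_add_neg, ← Finset.sum_neg_distrib, ← Finset.sum_add_distrib]
    exact Finset.sum_congr rfl fun i _ => by ring
  have hD : ((-(∑ i, n i * δ i) : ℤ) : ℂ) = -(∑ i, (n i : ℂ) * (δ i : ℂ)) := by
    push_cast; ring
  rw [quad_reflect τ hsymm ε n, hL1, hL2, hD, sum_torsionPt τ ε δ n, sum_torsionPt τ ε δ ε]
  ring

/-- Reflection identity at a two-torsion point:
`θ(m+w) = exp(-πi εᵀδ - 2πi εᵀw) θ(m-w)`. -/
lemma theta_reflect {g : ℕ} (τ : Matrix (Fin g) (Fin g) ℂ) (hsymm : τ.IsSymm)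
    (ε δ : Fin g → ℤ) (w : Fin g → ℂ) :
    riemannTheta τ (fun i => torsionPt τ ε δ i + w i) =
      Complex.exp (-((Real.pi : ℂ) * Complex.I * (∑ i, (ε i : ℂ) * (δ i : ℂ))) -
          2 * (Real.pi : ℂ) * Complex.I * (∑ i, (ε i : ℂ) * w i)) *
        riemannTheta τ (fun i => torsionPt τ ε δ i - w i) := by
  rw [riemannTheta, ← Equiv.tsum_eq (negSubEquiv ε)]
  rw [show (∑' n : Fin g → ℤ,
      Complex.exp ((Real.pi : ℂ) * Complex.I *
          (∑ i, ∑ j, ((negSubEquiv ε n) i : ℂ) * τ i j * ((negSubEquiv ε n) j : ℂ)) +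
        2 * (Real.pi : ℂ) * Complex.I *
          (∑ i, ((negSubEquiv ε n) i : ℂ) * (torsionPt τ ε δ i + w i)))) =
    ∑' n : Fin g → ℤ,
      Complex.exp (-((Real.pi : ℂ) * Complex.I * (∑ i, (ε i : ℂ) * (δ i : ℂ))) -
          2 * (Real.pi : ℂ) * Complex.I * (∑ i, (ε i : ℂ) * w i)) *
        Complex.exp ((Real.pi : ℂ) * Complex.I * (∑ i, ∑ j, (n i : ℂ) * τ i j * (n j : ℂ)) +
          2 * (Real.pi : ℂ) * Complex.I *
            (∑ i, (n i : ℂ) * (torsionPt τ ε δ i - w i))) from ?_]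
  · rw [tsum_mul_left, riemannTheta]
  · refine tsum_congr fun n => ?_
    have hcast : ∀ i, (((negSubEquiv ε n) i : ℤ) : ℂ) = -(n i : ℂ) - (ε i : ℂ) := by
      intro i; simp [negSubEquiv]
    simp only [hcast]
    rw [expo_eq τ hsymm ε δ n w, Complex.exp_add, Complex.exp_add,
      Complex.exp_int_mul_two_pi_mul_I]
    ring

lemma exp_pi_I_int (k : ℤ) :
    Complex.exp ((Real.pi : ℂ) * Complex.I * (k : ℂ)) = (-1 : ℂ) ^ k := by
  rw [mul_comm ((Real.pi : ℂ) * Complex.I) (k : ℂ), Complex.exp_int_mul,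
    Complex.exp_pi_mul_I]

lemma neg_one_zpow_sq (k : ℤ) : (-1 : ℂ) ^ k * (-1 : ℂ) ^ k = 1 := by
  rw [← zpow_add₀ (by norm_num : (-1 : ℂ) ≠ 0), ← two_mul, _root_.zpow_mul]
  norm_num

/-- Evaluation at the fixed points of the involution on the non-standard torus rank 2
semi-abelic variety: `T_u(m − (b₁+b₂)/2, (0, σ exp(πi εᵀ(b₁−b₂)), 1)) =
(1 + σ(−1)^{εᵀδ}) θ(τ, m + (b₂−b₁)/2)`; in particular this vanishes when
`σ = −(−1)^{εᵀδ}`. -/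
theorem statement15 (h : ℕ) (hh : 1 ≤ h) (τ : Matrix (Fin h) (Fin h) ℂ)
    (hsymm : τ.IsSymm)
    (hpos : (Matrix.of fun i j => (τ i j).im).PosDef)
    (b₁ b₂ : Fin h → ℂ) (ε δ : Fin h → ℤ) (σ : ℂ) (hσ : σ = 1 ∨ σ = -1) :
    Tu2 τ b₁ b₂ (fun i => torsionPt τ ε δ i - (b₁ i + b₂ i) / 2) 0
        (σ * Complex.exp ((Real.pi : ℂ) * Complex.I * (∑ i, (ε i : ℂ) * (b₁ i - b₂ i)))) 1 =
      (1 + σ * (-1 : ℂ) ^ (∑ i, ε i * δ i)) *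
        riemannTheta τ (fun i => torsionPt τ ε δ i + (b₂ i - b₁ i) / 2) ∧
    (σ = -(-1 : ℂ) ^ (∑ i, ε i * δ i) →
      Tu2 τ b₁ b₂ (fun i => torsionPt τ ε δ i - (b₁ i + b₂ i) / 2) 0
        (σ * Complex.exp ((Real.pi : ℂ) * Complex.I * (∑ i, (ε i : ℂ) * (b₁ i - b₂ i)))) 1
        = 0) := by
  have hz1 : (fun i => torsionPt τ ε δ i - (b₁ i + b₂ i) / 2) + b₁
      = fun i => torsionPt τ ε δ i + (b₁ i - b₂ i) / 2 := by
    funext i; simp only [Pi.add_apply]; ring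
  have hz2 : (fun i => torsionPt τ ε δ i - (b₁ i + b₂ i) / 2) + b₂
      = fun i => torsionPt τ ε δ i + (b₂ i - b₁ i) / 2 := by
    funext i; simp only [Pi.add_apply]; ring
  have href : riemannTheta τ (fun i => torsionPt τ ε δ i + (b₁ i - b₂ i) / 2)
      = Complex.exp (-((Real.pi : ℂ) * Complex.I * (∑ i, (ε i : ℂ) * (δ i : ℂ))) -
          2 * (Real.pi : ℂ) * Complex.I * (∑ i, (ε i : ℂ) * ((b₁ i - b₂ i) / 2))) *
        riemannTheta τ (fun i => torsionPt τ ε δ i - (b₁ i - b₂ i) / 2) :=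
    theta_reflect τ hsymm ε δ (fun i => (b₁ i - b₂ i) / 2)
  have hmw : (fun i => torsionPt τ ε δ i - (b₁ i - b₂ i) / 2)
      = fun i => torsionPt τ ε δ i + (b₂ i - b₁ i) / 2 := by
    funext i; ring
  rw [hmw] at href
  have hcoef : Complex.exp ((Real.pi : ℂ) * Complex.I * (∑ i, (ε i : ℂ) * (b₁ i - b₂ i))) *
      Complex.exp (-((Real.pi : ℂ) * Complex.I * (∑ i, (ε i : ℂ) * (δ i : ℂ))) -
        2 * (Real.pi : ℂ) * Complex.I * (∑ i, (ε i : ℂ) * ((b₁ i - b₂ i) / 2)))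
      = (-1 : ℂ) ^ (∑ i, ε i * δ i) := by
    rw [← Complex.exp_add]
    have hG : (∑ i, (ε i : ℂ) * ((b₁ i - b₂ i) / 2))
        = (∑ i, (ε i : ℂ) * (b₁ i - b₂ i)) / 2 := by
      rw [Finset.sum_div]; exact Finset.sum_congr rfl fun i _ => by ring
    have hE : (∑ i, (ε i : ℂ) * (δ i : ℂ)) = (((∑ i, ε i * δ i : ℤ) : ℂ)) := by
      push_cast; ring
    have : (Real.pi : ℂ) * Complex.I * (∑ i, (ε i : ℂ) * (b₁ i - b₂ i)) +
        (-((Real.pi : ℂ) * Complex.I * (∑ i, (ε i : ℂ) * (δ i : ℂ))) -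
          2 * (Real.pi : ℂ) * Complex.I * (∑ i, (ε i : ℂ) * ((b₁ i - b₂ i) / 2)))
        = (Real.pi : ℂ) * Complex.I * (((-(∑ i, ε i * δ i) : ℤ) : ℂ)) := by
      rw [hG, hE]; push_cast; ring
    rw [this, exp_pi_I_int, _root_.zpow_neg]
    exact inv_eq_of_mul_eq_one_left (neg_one_zpow_sq _)
  have key : Tu2 τ b₁ b₂ (fun i => torsionPt τ ε δ i - (b₁ i + b₂ i) / 2) 0
      (σ * Complex.exp ((Real.pi : ℂ) * Complex.I * (∑ i, (ε i : ℂ) * (b₁ i - b₂ i)))) 1 =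
      (1 + σ * (-1 : ℂ) ^ (∑ i, ε i * δ i)) *
        riemannTheta τ (fun i => torsionPt τ ε δ i + (b₂ i - b₁ i) / 2) := by
    rw [Tu2, hz1, hz2, href]
    rw [show σ * Complex.exp ((Real.pi : ℂ) * Complex.I *
          (∑ i, (ε i : ℂ) * (b₁ i - b₂ i))) *
        (Complex.exp (-((Real.pi : ℂ) * Complex.I * (∑ i, (ε i : ℂ) * (δ i : ℂ))) -
            2 * (Real.pi : ℂ) * Complex.I * (∑ i, (ε i : ℂ) * ((b₁ i - b₂ i) / 2))) *
          riemannTheta τ (fun i => torsionPt τ ε δ i + (b₂ i - b₁ i) / 2))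
      = σ * (-1 : ℂ) ^ (∑ i, ε i * δ i) *
          riemannTheta τ (fun i => torsionPt τ ε δ i + (b₂ i - b₁ i) / 2) by
        rw [← hcoef]; ring]
    ring
  refine ⟨key, fun hσ' => ?_⟩
  rw [key, hσ', neg_mul, neg_one_zpow_sq]
  ring
end

section
/- Let h ≥ 1, τ ∈ H_h, b₁, b₂, b₃ ∈ ℂ^h, and let λ₂, λ₄ be nonzero complex numbers; set μ₁ := λ₂^{-1}λ₄, μ₂ := λ₄, μ₃ := λ₂^{-1}λ₄². Define T_u(z,(u₀,u₁,u₂,u₃)) := u₀θ(τ,z) + μ₁u₁θ(τ,z+b₁) + μ₂u₂θ(τ,z+b₂) + μ₃u₃θ(τ,z+b₃), T_v(z,(v₀,v₁,v₂,v₃)) := v₀θ(τ,z+b₁+b₂+b₃) + μ₁v₁θ(τ,z+b₂+b₃) + μ₂v₂θ(τ,z+b₁+b₃) + μ₃v₃θ(τ,z+b₁+b₂), and T_F(z,(y₀,…,y₅)) := y₀θ(τ,z+b₁) + y₁θ(τ,z+b₂+b₃) + λ₂(y₂θ(τ,z+b₂) + y₃θ(τ,z+b₁+b₃)) + λ₄(y₄θ(τ,z+b₃)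 + y₅θ(τ,z+b₁+b₂)). Then for all z ∈ ℂ^h and all complex y₀,…,y₅, u₀,…,u₃: T_F(−b₁−b₂−b₃−z, (y₁,y₀,y₃,y₂,y₅,y₄)) = T_F(z,(y₀,y₁,y₂,y₃,y₄,y₅)) and T_v(−b₁−b₂−b₃−z, (u₀,u₁,u₂,u₃)) = T_u(z,(u₀,u₁,u₂,u₃)); that is, the semi-abelic theta divisor of the octahedral torus rank 3 degeneration is preserved by the involution j(z,y) = (−b₁−b₂−b₃−z, (y₁,y₀,y₃,y₂,y₅,y₄)). -/
open Complex Matrix Finset Filter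

/-- Theta divisor on the first `ℙ³`-component of the octahedral torus rank 3 degeneration,
with `μ₁ = λ₂⁻¹λ₄`, `μ₂ = λ₄`, `μ₃ = λ₂⁻¹λ₄²`:
`T_u = u₀θ(z) + μ₁u₁θ(z+b₁) + μ₂u₂θ(z+b₂) + μ₃u₃θ(z+b₃)`. -/
noncomputable def TuOct {h : ℕ} (τ : Matrix (Fin h) (Fin h) ℂ) (b₁ b₂ b₃ : Fin h → ℂ)
    (l2 l4 : ℂ) (z : Fin h → ℂ) (u₀ u₁ u₂ u₃ : ℂ) : ℂ :=
  u₀ * riemannTheta τ z + l2⁻¹ * l4 * u₁ * riemannTheta τ (z + b₁) +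
    l4 * u₂ * riemannTheta τ (z + b₂) + l2⁻¹ * l4 ^ 2 * u₃ * riemannTheta τ (z + b₃)

/-- Theta divisor on the second `ℙ³`-component:
`T_v = v₀θ(z+b₁+b₂+b₃) + μ₁v₁θ(z+b₂+b₃) + μ₂v₂θ(z+b₁+b₃) + μ₃v₃θ(z+b₁+b₂)`. -/
noncomputable def TvOct {h : ℕ} (τ : Matrix (Fin h) (Fin h) ℂ) (b₁ b₂ b₃ : Fin h → ℂ)
    (l2 l4 : ℂ) (z : Fin h → ℂ) (v₀ v₁ v₂ v₃ : ℂ) : ℂ :=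
  v₀ * riemannTheta τ (z + b₁ + b₂ + b₃) + l2⁻¹ * l4 * v₁ * riemannTheta τ (z + b₂ + b₃) +
    l4 * v₂ * riemannTheta τ (z + b₁ + b₃) + l2⁻¹ * l4 ^ 2 * v₃ * riemannTheta τ (z + b₁ + b₂)

/-- Theta divisor on the octahedral `F(2,2)`-component:
`T_F = y₀θ(z+b₁) + y₁θ(z+b₂+b₃) + λ₂(y₂θ(z+b₂) + y₃θ(z+b₁+b₃)) + λ₄(y₄θ(z+b₃) + y₅θ(z+b₁+b₂))`. -/
noncomputable def TFOct {h : ℕ} (τ : Matrix (Fin h) (Fin h) ℂ) (b₁ b₂ b₃ : Fin h → ℂ)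
    (l2 l4 : ℂ) (z : Fin h → ℂ) (y₀ y₁ y₂ y₃ y₄ y₅ : ℂ) : ℂ :=
  y₀ * riemannTheta τ (z + b₁) + y₁ * riemannTheta τ (z + b₂ + b₃) +
    l2 * (y₂ * riemannTheta τ (z + b₂) + y₃ * riemannTheta τ (z + b₁ + b₃)) +
    l4 * (y₄ * riemannTheta τ (z + b₃) + y₅ * riemannTheta τ (z + b₁ + b₂))

lemma rt_neg' {g : ℕ} (τ : Matrix (Fin g) (Fin g) ℂ) (z w : Fin g → ℂ) (hw : w = -z) :
    riemannTheta τ w = riemannTheta τ z := by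
  rw [hw, riemannTheta_neg]

/-- The semi-abelic theta divisor of the octahedral torus rank 3 degeneration is preserved
by the involution `j(z,y) = (−b₁−b₂−b₃−z, (y₁,y₀,y₃,y₂,y₅,y₄))`. -/
theorem statement16 (h : ℕ) (hh : 1 ≤ h) (τ : Matrix (Fin h) (Fin h) ℂ)
    (hsymm : τ.IsSymm)
    (hpos : (Matrix.of fun i j => (τ i j).im).PosDef)
    (b₁ b₂ b₃ : Fin h → ℂ) (l2 l4 : ℂ) (hl2 : l2 ≠ 0) (hl4 : l4 ≠ 0) :
    ∀ (z : Fin h → ℂ) (y₀ y₁ y₂ y₃ y₄ y₅ u₀ u₁ u₂ u₃ : ℂ),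
      TFOct τ b₁ b₂ b₃ l2 l4 (-b₁ - b₂ - b₃ - z) y₁ y₀ y₃ y₂ y₅ y₄ =
        TFOct τ b₁ b₂ b₃ l2 l4 z y₀ y₁ y₂ y₃ y₄ y₅ ∧
      TvOct τ b₁ b₂ b₃ l2 l4 (-b₁ - b₂ - b₃ - z) u₀ u₁ u₂ u₃ =
        TuOct τ b₁ b₂ b₃ l2 l4 z u₀ u₁ u₂ u₃ := by
  intro z y₀ y₁ y₂ y₃ y₄ y₅ u₀ u₁ u₂ u₃
  unfold TFOct TvOct TuOct
  rw [rt_neg' τ (z + b₂ + b₃) (-b₁ - b₂ - b₃ - z + b₁) (by funext i; simp; ring),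
    rt_neg' τ (z + b₁) (-b₁ - b₂ - b₃ - z + b₂ + b₃) (by funext i; simp; ring),
    rt_neg' τ (z + b₁ + b₃) (-b₁ - b₂ - b₃ - z + b₂) (by funext i; simp; ring),
    rt_neg' τ (z + b₂) (-b₁ - b₂ - b₃ - z + b₁ + b₃) (by funext i; simp; ring),
    rt_neg' τ (z + b₁ + b₂) (-b₁ - b₂ - b₃ - z + b₃) (by funext i; simp; ring),
    rt_neg' τ (z + b₃) (-b₁ - b₂ - b₃ - z + b₁ + b₂) (by funext i; simp; ring),
    rt_neg' τ z (-b₁ - b₂ - b₃ - z + b₁ + b₂ + b₃) (by funext i; simp; ring)]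
  exact ⟨by ring, rfl⟩
end

section
/- Let h ≥ 1, τ ∈ H_h, b₁, b₂, b₃ ∈ ℂ^h, and let λ₂, λ₄ be nonzero complex numbers; set μ₁ := λ₂^{-1}λ₄, μ₂ := λ₄, μ₃ := λ₂^{-1}λ₄². Define T_u(z,(u₀,u₁,u₂,u₃)) := u₀θ(τ,z) + μ₁u₁θ(τ,z+b₁) + μ₂u₂θ(τ,z+b₂) + μ₃u₃θ(τ,z+b₃) and T_F(z,(y₀,…,y₅)) := y₀θ(τ,z+b₁) + y₁θ(τ,z+b₂+b₃) + λ₂(y₂θ(τ,z+b₂) + y₃θ(τ,z+b₁+b₃)) + λ₄(y₄θ(τ,z+b₃) + y₅θ(τ,z+b₁+b₂)). Then for all z ∈ ℂ^h and all p, q, r ∈ ℂ the following four gluing compatibilities hold: (i) λ₂·T_u(z,(0,p,q,r)) = λ₄·T_F(z,(p,0,q,0,r,0)); (ii) T_u(z+b₁,(p,0,r,λ₂²λ₄^{-2}q)) = T_F(z,(p,0,0,q,0,r)); (iii) λ₂·T_u(z+b₂,(λ₄²q, λ₄²r, 0, p)) = λ₄²·T_F(z,(0,p,q,0,0,r)); (iv)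 λ₄·T_u(z+b₃,(r, λ₂²λ₄^{-2}q, λ₄^{-2}p, 0)) = T_F(z,(0,p,0,q,r,0)). That is, under each of the four gluing maps identifying a face of the octahedral component with a face of the tetrahedral component, the two restrictions of the semi-abelic theta divisor agree up to the stated nonzero scalar. -/
open Complex Matrix Finset Filter

/-- The four gluing compatibilities between the octahedral component and the tetrahedral
component of the torus rank 3 semi-abelic variety with toric part `F(2,2) ⊔ 2ℙ³`. -/
theorem statement17 (h : ℕ) (hh : 1 ≤ h) (τ : Matrix (Fin h) (Fin h) ℂ)
    (hsymm : τ.IsSymm)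
    (hpos : (Matrix.of fun i j => (τ i j).im).PosDef)
    (b₁ b₂ b₃ : Fin h → ℂ) (l2 l4 : ℂ) (hl2 : l2 ≠ 0) (hl4 : l4 ≠ 0) :
    ∀ (z : Fin h → ℂ) (p q r : ℂ),
      l2 * TuOct τ b₁ b₂ b₃ l2 l4 z 0 p q r =
        l4 * TFOct τ b₁ b₂ b₃ l2 l4 z p 0 q 0 r 0 ∧
      TuOct τ b₁ b₂ b₃ l2 l4 (z + b₁) p 0 r (l2 ^ 2 * (l4 ^ 2)⁻¹ * q) =
        TFOct τ b₁ b₂ b₃ l2 l4 z p 0 0 q 0 r ∧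
      l2 * TuOct τ b₁ b₂ b₃ l2 l4 (z + b₂) (l4 ^ 2 * q) (l4 ^ 2 * r) 0 p =
        l4 ^ 2 * TFOct τ b₁ b₂ b₃ l2 l4 z 0 p q 0 0 r ∧
      l4 * TuOct τ b₁ b₂ b₃ l2 l4 (z + b₃) r (l2 ^ 2 * (l4 ^ 2)⁻¹ * q) ((l4 ^ 2)⁻¹ * p) 0 =
        TFOct τ b₁ b₂ b₃ l2 l4 z 0 p 0 q r 0 := by
  intro z p q r
  have e1 : z + b₁ + b₂ = z + b₂ + b₁ := by abel
  have e2 : z + b₁ + b₃ = z + b₃ + b₁ := by abel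
  have e3 : z + b₂ + b₃ = z + b₃ + b₂ := by abel
  refine ⟨?_, ?_, ?_, ?_⟩ <;>
    simp only [TuOct, TFOct, e1, e2, e3] <;> field_simp <;> ring
end

section
/- Let h ≥ 1, τ ∈ H_h, b₁, b₂, b₃ ∈ ℂ^h, and let λ₂, λ₄ be nonzero complex numbers; set μ₂ := λ₄ and μ₃ := λ₂^{-1}λ₄², and define T_u(z,(u₀,u₁,u₂,u₃)) := u₀θ(τ,z) + λ₂^{-1}λ₄·u₁θ(τ,z+b₁) + μ₂u₂θ(τ,z+b₂) + μ₃u₃θ(τ,z+b₃). Let ε, δ ∈ ℤ^h, set m := (τε + δ)/2. Then for every s ∈ ℂ, T_u( m − (b₂+b₃)/2, (0,0,1,s) ) = ( μ₂·(−1)^{εᵀδ}·exp(−πi·εᵀ(b₂−b₃)) + μ₃·s ) · θ(τ, −m + (b₂−b₃)/2). In particular this value vanishes identically in τ, b exactly when s = −(−1)^{εᵀδ}·exp(−πi·εᵀ(b₂−b₃))·λ₂λ₄^{-1}, identifying the fixed points of the involution on this edge that lie on the semi-abelic theta divisor. -/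
open Complex Matrix Finset Filter

lemma theta_even {g : ℕ} (τ : Matrix (Fin g) (Fin g) ℂ) (z : Fin g → ℂ) :
    riemannTheta τ (fun i => -z i) = riemannTheta τ z := by
  unfold riemannTheta
  rw [← (Equiv.neg (Fin g → ℤ)).tsum_eq]
  refine tsum_congr fun n => congrArg Complex.exp ?_
  simp only [Equiv.neg_apply, Pi.neg_apply, Int.cast_neg]
  congr 1
  · congr 1
    exact Finset.sum_congr rfl fun i _ => Finset.sum_congr rfl fun j _ => by ring
  · congr 1
    exact Finset.sum_congr rfl fun i _ => by ring

lemma theta_shift {g : ℕ} (τ : Matrix (Fin g) (Fin g) ℂ) (hsymm : τ.IsSymm)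
    (ε δ : Fin g → ℤ) (z : Fin g → ℂ) :
    riemannTheta τ (fun i => z i + (∑ j, τ i j * (ε j : ℂ)) + (δ i : ℂ)) =
      Complex.exp (-(Real.pi : ℂ) * Complex.I * (∑ i, ∑ j, (ε i : ℂ) * τ i j * (ε j : ℂ))
        - 2 * (Real.pi : ℂ) * Complex.I * (∑ i, (ε i : ℂ) * z i)) * riemannTheta τ z := by
  unfold riemannTheta
  rw [← tsum_mul_left]
  rw [← Equiv.tsum_eq (Equiv.subRight ε)]
  refine tsum_congr fun n => ?_
  simp only [Equiv.subRight_apply, Pi.sub_apply, Int.cast_sub]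
  rw [← Complex.exp_add]
  have hswap : ∑ i, ∑ j, (ε i : ℂ) * τ i j * (n j : ℂ)
      = ∑ i, ∑ j, (n i : ℂ) * τ i j * (ε j : ℂ) := by
    rw [Finset.sum_comm]
    exact Finset.sum_congr rfl fun i _ => Finset.sum_congr rfl fun j _ => by
      rw [hsymm.apply]; ring
  have hQ : ∑ i, ∑ j, ((n i : ℂ) - (ε i : ℂ)) * τ i j * ((n j : ℂ) - (ε j : ℂ))
      = (∑ i, ∑ j, (n i : ℂ) * τ i j * (n j : ℂ))
        - 2 * (∑ i, ∑ j, (n i : ℂ) * τ i j * (ε j : ℂ))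
        + (∑ i, ∑ j, (ε i : ℂ) * τ i j * (ε j : ℂ)) := by
    simp only [sub_mul, mul_sub, Finset.sum_sub_distrib]
    rw [hswap]; ring
  have hA : ∑ i, ((n i : ℂ) - (ε i : ℂ)) * (z i + (∑ j, τ i j * (ε j : ℂ)) + (δ i : ℂ))
      = (∑ i, (n i : ℂ) * z i) - (∑ i, (ε i : ℂ) * z i)
        + (∑ i, ∑ j, (n i : ℂ) * τ i j * (ε j : ℂ))
        - (∑ i, ∑ j, (ε i : ℂ) * τ i j * (ε j : ℂ))
        + ((∑ i, (n i - ε i) * δ i : ℤ) : ℂ) := by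
    push_cast
    simp only [mul_add, sub_mul, mul_sub, Finset.mul_sum, Finset.sum_add_distrib,
      Finset.sum_sub_distrib, mul_assoc]
    ring
  have key : (Real.pi : ℂ) * Complex.I *
        (∑ i, ∑ j, ((n i : ℂ) - (ε i : ℂ)) * τ i j * ((n j : ℂ) - (ε j : ℂ))) +
      2 * (Real.pi : ℂ) * Complex.I *
        (∑ i, ((n i : ℂ) - (ε i : ℂ)) * (z i + (∑ j, τ i j * (ε j : ℂ)) + (δ i : ℂ)))
      = (-(Real.pi : ℂ) * Complex.I * (∑ i, ∑ j, (ε i : ℂ) * τ i j * (ε j : ℂ))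
          - 2 * (Real.pi : ℂ) * Complex.I * (∑ i, (ε i : ℂ) * z i)
          + ((Real.pi : ℂ) * Complex.I * (∑ i, ∑ j, (n i : ℂ) * τ i j * (n j : ℂ)) +
            2 * (Real.pi : ℂ) * Complex.I * (∑ i, (n i : ℂ) * z i)))
        + ((∑ i, (n i - ε i) * δ i : ℤ) : ℂ) * (2 * (Real.pi : ℂ) * Complex.I) := by
    rw [hQ, hA]; ring
  rw [key, Complex.exp_add, Complex.exp_int_mul_two_pi_mul_I, mul_one]


/-- Evaluation at the fixed points of the involution on the edge `u₀ = u₁ = 0`: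
`T_u(m − (b₂+b₃)/2, (0,0,1,s)) = (μ₂(−1)^{εᵀδ} exp(−πi εᵀ(b₂−b₃)) + μ₃ s) θ(τ, −m + (b₂−b₃)/2)`;
in particular it vanishes when `s = −(−1)^{εᵀδ} exp(−πi εᵀ(b₂−b₃)) λ₂ λ₄⁻¹`. -/
theorem statement18 (h : ℕ) (hh : 1 ≤ h) (τ : Matrix (Fin h) (Fin h) ℂ)
    (hsymm : τ.IsSymm)
    (hpos : (Matrix.of fun i j => (τ i j).im).PosDef)
    (b₁ b₂ b₃ : Fin h → ℂ) (l2 l4 : ℂ) (hl2 : l2 ≠ 0) (hl4 : l4 ≠ 0)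
    (ε δ : Fin h → ℤ) :
    ∀ s : ℂ,
      TuOct τ b₁ b₂ b₃ l2 l4 (fun i => torsionPt τ ε δ i - (b₂ i + b₃ i) / 2) 0 0 1 s =
        (l4 * (-1 : ℂ) ^ (∑ i, ε i * δ i) *
            Complex.exp (-(Real.pi : ℂ) * Complex.I * (∑ i, (ε i : ℂ) * (b₂ i - b₃ i))) +
          l2⁻¹ * l4 ^ 2 * s) *
          riemannTheta τ (fun i => -torsionPt τ ε δ i + (b₂ i - b₃ i) / 2) ∧
      (s = -(-1 : ℂ) ^ (∑ i, ε i * δ i) *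
          Complex.exp (-(Real.pi : ℂ) * Complex.I * (∑ i, (ε i : ℂ) * (b₂ i - b₃ i))) *
          l2 * l4⁻¹ →
        TuOct τ b₁ b₂ b₃ l2 l4 (fun i => torsionPt τ ε δ i - (b₂ i + b₃ i) / 2) 0 0 1 s
          = 0) := by
  intro s
  set w : Fin h → ℂ := fun i => -torsionPt τ ε δ i + (b₂ i - b₃ i) / 2 with hw
  have h2 : (fun i => torsionPt τ ε δ i - (b₂ i + b₃ i) / 2) + b₂
      = fun i => w i + (∑ j, τ i j * (ε j : ℂ)) + (δ i : ℂ) := by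
    funext i
    simp only [Pi.add_apply, hw, torsionPt]
    ring
  have h3 : (fun i => torsionPt τ ε δ i - (b₂ i + b₃ i) / 2) + b₃
      = fun i => -(w i) := by
    funext i
    simp only [Pi.add_apply, hw, torsionPt]
    ring
  have hsum : ∑ i, (ε i : ℂ) * (∑ j, τ i j * (ε j : ℂ))
      = ∑ i, ∑ j, (ε i : ℂ) * τ i j * (ε j : ℂ) :=
    Finset.sum_congr rfl fun i _ => by
      rw [Finset.mul_sum]
      exact Finset.sum_congr rfl fun j _ => (mul_assoc _ _ _).symm
  have hsplit : ∑ i, (ε i : ℂ) * w i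
      = -(1/2) * (∑ i, ∑ j, (ε i : ℂ) * τ i j * (ε j : ℂ))
        - (1/2) * ((∑ i, ε i * δ i : ℤ) : ℂ)
        + (1/2) * (∑ i, (ε i : ℂ) * (b₂ i - b₃ i)) := by
    rw [← hsum]
    push_cast
    rw [neg_mul, Finset.mul_sum, Finset.mul_sum, Finset.mul_sum, ← Finset.sum_neg_distrib,
      ← Finset.sum_sub_distrib, ← Finset.sum_add_distrib]
    refine Finset.sum_congr rfl fun i _ => ?_
    simp only [hw, torsionPt]
    ring
  have hC : Complex.exp (-(Real.pi : ℂ) * Complex.I * (∑ i, ∑ j, (ε i : ℂ) * τ i j * (ε j : ℂ))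
        - 2 * (Real.pi : ℂ) * Complex.I * (∑ i, (ε i : ℂ) * w i))
      = (-1 : ℂ) ^ (∑ i, ε i * δ i) *
          Complex.exp (-(Real.pi : ℂ) * Complex.I * (∑ i, (ε i : ℂ) * (b₂ i - b₃ i))) := by
    have : (-(Real.pi : ℂ) * Complex.I * (∑ i, ∑ j, (ε i : ℂ) * τ i j * (ε j : ℂ))
          - 2 * (Real.pi : ℂ) * Complex.I * (∑ i, (ε i : ℂ) * w i))
        = ((∑ i, ε i * δ i : ℤ) : ℂ) * ((Real.pi : ℂ) * Complex.I)
          + (-(Real.pi : ℂ) * Complex.I * (∑ i, (ε i : ℂ) * (b₂ i - b₃ i))) := by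
      rw [hsplit]; ring
    rw [this, Complex.exp_add, Complex.exp_int_mul, Complex.exp_pi_mul_I]
  have hE : TuOct τ b₁ b₂ b₃ l2 l4 (fun i => torsionPt τ ε δ i - (b₂ i + b₃ i) / 2) 0 0 1 s =
      (l4 * (-1 : ℂ) ^ (∑ i, ε i * δ i) *
          Complex.exp (-(Real.pi : ℂ) * Complex.I * (∑ i, (ε i : ℂ) * (b₂ i - b₃ i))) +
        l2⁻¹ * l4 ^ 2 * s) * riemannTheta τ w := by
    unfold TuOct
    rw [h2, h3, theta_shift τ hsymm ε δ w, theta_even τ w, hC]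
    ring
  refine ⟨hE, fun hs => ?_⟩
  rw [hE, hs]
  have : (l4 * (-1 : ℂ) ^ (∑ i, ε i * δ i) *
        Complex.exp (-(Real.pi : ℂ) * Complex.I * (∑ i, (ε i : ℂ) * (b₂ i - b₃ i))) +
      l2⁻¹ * l4 ^ 2 *
        (-(-1 : ℂ) ^ (∑ i, ε i * δ i) *
          Complex.exp (-(Real.pi : ℂ) * Complex.I * (∑ i, (ε i : ℂ) * (b₂ i - b₃ i))) *
          l2 * l4⁻¹)) = 0 := by
    field_simp
    ring
  rw [this, zero_mul]
end

section
/- Let h ≥ 1, τ ∈ H_h, b₁, b₂, b₃ ∈ ℂ^h, and let c be a nonzero complex number; write B := b₁+b₂+b₃. Define T_u(z,(u₀,u₁,u₂,u₃)) := u₀θ(τ,z) + u₁θ(τ,z+b₁) + c·u₂θ(τ,z+b₂) + u₃θ(τ,z+b₃), T_x(z,(x₀,…,x₄)) := x₀θ(τ,z+b₃) + x₁θ(τ,z+b₁+b₃) + c^{-1}x₂θ(τ,z+b₂) + c·x₃θ(τ,z+b₂+b₃) + x₄θ(τ,z+b₁), and set T_v(z,v) := T_u(−B−z, v) and T_y(z,y)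 := T_x(−B−z, y). Then for all z ∈ ℂ^h and all p, q, r, s ∈ ℂ the following five gluing compatibilities hold: (i) T_x(z,(p,q,0,r,0)) = T_u(z+b₃,(p,q,r,0)); (ii) T_x(z,(p,q,0,0,r)) = T_v(z−b₂,(q,p,0,r)); (iii) c·T_x(z,(p,0,q,r,0)) = T_v(z−b₁,(c²r,0,p,q)); (iv) T_x(z,(p,0,q,0,r)) = T_u(z,(0,r,c^{-2}q,p)); (v) T_x(z,(0,p,q,r,s)) = T_y(z,(0,c^{-1}q,cp,c^{-1}s,cr)). That is, the explicit semi-abelic theta divisor of the torus rank 3 degeneration with toric part two tetrahedra and two square pyramids is compatible with all the gluings, including the gluing of the bases of the two pyramids. -/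
open Complex Matrix Finset Filter

/-- Theta divisor on the first tetrahedral (`ℙ³`) component of the torus rank 3 degeneration
with toric part two tetrahedra and two square pyramids:
`T_u = u₀θ(z) + u₁θ(z+b₁) + c u₂θ(z+b₂) + u₃θ(z+b₃)`. -/
noncomputable def TuPyr {h : ℕ} (τ : Matrix (Fin h) (Fin h) ℂ) (b₁ b₂ b₃ : Fin h → ℂ)
    (c : ℂ) (z : Fin h → ℂ) (u₀ u₁ u₂ u₃ : ℂ) : ℂ :=
  u₀ * riemannTheta τ z + u₁ * riemannTheta τ (z + b₁) +
    c * u₂ * riemannTheta τ (z + b₂) + u₃ * riemannTheta τ (z + b₃)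

/-- Theta divisor on the first pyramidal (quadric cone in `ℙ⁴`) component:
`T_x = x₀θ(z+b₃) + x₁θ(z+b₁+b₃) + c⁻¹x₂θ(z+b₂) + c x₃θ(z+b₂+b₃) + x₄θ(z+b₁)`. -/
noncomputable def TxPyr {h : ℕ} (τ : Matrix (Fin h) (Fin h) ℂ) (b₁ b₂ b₃ : Fin h → ℂ)
    (c : ℂ) (z : Fin h → ℂ) (x₀ x₁ x₂ x₃ x₄ : ℂ) : ℂ :=
  x₀ * riemannTheta τ (z + b₃) + x₁ * riemannTheta τ (z + b₁ + b₃) +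
    c⁻¹ * x₂ * riemannTheta τ (z + b₂) + c * x₃ * riemannTheta τ (z + b₂ + b₃) +
    x₄ * riemannTheta τ (z + b₁)

/-- The five gluing compatibilities of the semi-abelic theta divisor of the torus rank 3
degeneration with toric part two tetrahedra and two square pyramids, where
`T_v(z,v) := T_u(−B−z, v)` and `T_y(z,y) := T_x(−B−z, y)` with `B = b₁+b₂+b₃`. -/
theorem statement19 (h : ℕ) (hh : 1 ≤ h) (τ : Matrix (Fin h) (Fin h) ℂ)
    (hsymm : τ.IsSymm)
    (hpos : (Matrix.of fun i j => (τ i j).im).PosDef)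
    (b₁ b₂ b₃ : Fin h → ℂ) (c : ℂ) (hc : c ≠ 0) :
    ∀ (z : Fin h → ℂ) (p q r s : ℂ),
      TxPyr τ b₁ b₂ b₃ c z p q 0 r 0 = TuPyr τ b₁ b₂ b₃ c (z + b₃) p q r 0 ∧
      TxPyr τ b₁ b₂ b₃ c z p q 0 0 r =
        TuPyr τ b₁ b₂ b₃ c (-(b₁ + b₂ + b₃) - (z - b₂)) q p 0 r ∧
      c * TxPyr τ b₁ b₂ b₃ c z p 0 q r 0 =
        TuPyr τ b₁ b₂ b₃ c (-(b₁ + b₂ + b₃) - (z - b₁)) (c ^ 2 * r) 0 p q ∧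
      TxPyr τ b₁ b₂ b₃ c z p 0 q 0 r =
        TuPyr τ b₁ b₂ b₃ c z 0 r ((c ^ 2)⁻¹ * q) p ∧
      TxPyr τ b₁ b₂ b₃ c z 0 p q r s =
        TxPyr τ b₁ b₂ b₃ c (-(b₁ + b₂ + b₃) - z) 0 (c⁻¹ * q) (c * p) (c⁻¹ * s) (c * r) := by
  intro z p q r s
  have E : ∀ w : Fin h → ℂ, riemannTheta τ (-w) = riemannTheta τ w :=
    fun w => riemannTheta_neg τ w
  refine ⟨?_, ?_, ?_, ?_, ?_⟩
  · unfold TxPyr TuPyr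
    rw [show z + b₃ + b₁ = z + b₁ + b₃ from by ring, show z + b₃ + b₂ = z + b₂ + b₃ from by ring]
    ring
  · unfold TxPyr TuPyr
    rw [show -(b₁ + b₂ + b₃) - (z - b₂) + b₁ = -(z + b₃) from by ring,
      show -(b₁ + b₂ + b₃) - (z - b₂) + b₃ = -(z + b₁) from by ring,
      show -(b₁ + b₂ + b₃) - (z - b₂) = -(z + b₁ + b₃) from by ring,
      E (z + b₁ + b₃), E (z + b₃), E (z + b₁)]
    ring
  · unfold TxPyr TuPyr
    rw [show -(b₁ + b₂ + b₃) - (z - b₁) + b₂ = -(z + b₃) from by ring,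
      show -(b₁ + b₂ + b₃) - (z - b₁) + b₃ = -(z + b₂) from by ring,
      show -(b₁ + b₂ + b₃) - (z - b₁) = -(z + b₂ + b₃) from by ring,
      E (z + b₂ + b₃), E (z + b₃), E (z + b₂)]
    field_simp
    ring
  · unfold TxPyr TuPyr
    field_simp
    ring
  · unfold TxPyr
    rw [show -(b₁ + b₂ + b₃) - z + b₁ + b₃ = -(z + b₂) from by ring,
      show -(b₁ + b₂ + b₃) - z + b₂ + b₃ = -(z + b₁) from by ring,
      show -(b₁ + b₂ + b₃) - z + b₂ = -(z + b₁ + b₃) from by ring,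
      show -(b₁ + b₂ + b₃) - z + b₁ = -(z + b₂ + b₃) from by ring,
      E (z + b₂), E (z + b₁ + b₃), E (z + b₁), E (z + b₂ + b₃)]
    field_simp
    ring
end
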